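/- arXiv:2508.13432 — 15 statements merged into one kernel-verified Lean document; each statement's English description precedes it below -/
import Mathlib

section
/- There exists a fair division instance with 3 groups of 2 agents each and 5 goods, with additive nonnegative utilities, such that no allocation of the goods to the groups is EF1 for all agents. Concretely, with goods {1,...,5} and utilities u_{f1}=(2,2,0,0,1), u_{f2}=(0,0,2,2,1), u_{s1}=(0,2,0,2,1), u_{s2}=(2,0,2,0,1), u_{t1}=(2,0,0,2,1), u_{t2}=(0,2,2,0,1), every partition of the 5 goods into bundles B_f, B_s, B_t fails EF1 for at least one of the six agents. -/
def vInt : Fin 3 → Fin 2 → Fin 5 → ℤ :=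
  ![![![2, 2, 0, 0, 1], ![0, 0, 2, 2, 1]],
    ![![0, 2, 0, 2, 1], ![2, 0, 2, 0, 1]],
    ![![2, 0, 0, 2, 1], ![0, 2, 2, 0, 1]]]

lemma keyInt : ∀ π : Fin 5 → Fin 3, ∃ g g' : Fin 3, ∃ i : Fin 2, g' ≠ g ∧
    ∀ B ⊆ Finset.univ.filter (fun a => π a = g'), B.card ≤ 1 →
      ∑ a ∈ Finset.univ.filter (fun a => π a = g), vInt g i a <
        ∑ a ∈ Finset.univ.filter (fun a => π a = g') \ B, vInt g i a := by
  set_option maxRecDepth 100000 in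
  decide

/-- There is a concrete instance with 3 couples and 5 goods in which no allocation
of the goods to the three groups is EF1 for all six agents. -/
theorem stmt_1 :
    ∃ u : Fin 3 → Fin 2 → Fin 5 → ℝ,
      u = ![![![2, 2, 0, 0, 1], ![0, 0, 2, 2, 1]],
            ![![0, 2, 0, 2, 1], ![2, 0, 2, 0, 1]],
            ![![2, 0, 0, 2, 1], ![0, 2, 2, 0, 1]]] ∧
      (∀ g i a, 0 ≤ u g i a) ∧
      ∀ π : Fin 5 → Fin 3, ∃ g g' : Fin 3, ∃ i : Fin 2, g' ≠ g ∧
        ∀ B ⊆ Finset.univ.filter (fun a => π a = g'), B.card ≤ 1 →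
          ∑ a ∈ Finset.univ.filter (fun a => π a = g), u g i a <
            ∑ a ∈ Finset.univ.filter (fun a => π a = g') \ B, u g i a := by
  refine ⟨![![![2, 2, 0, 0, 1], ![0, 0, 2, 2, 1]],
            ![![0, 2, 0, 2, 1], ![2, 0, 2, 0, 1]],
            ![![2, 0, 0, 2, 1], ![0, 2, 2, 0, 1]]], rfl, ?_, ?_⟩
  · intro g i a
    fin_cases g <;> fin_cases i <;> fin_cases a <;> norm_num
  · have hcast : ∀ g i a, (![![![2, 2, 0, 0, 1], ![0, 0, 2, 2, 1]],
            ![![0, 2, 0, 2, 1], ![2, 0, 2, 0, 1]],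
            ![![2, 0, 0, 2, 1], ![0, 2, 2, 0, 1]]] : Fin 3 → Fin 2 → Fin 5 → ℝ) g i a
          = (vInt g i a : ℝ) := by
      intro g i a
      fin_cases g <;> fin_cases i <;> fin_cases a <;> simp [vInt, Matrix.vecHead, Matrix.vecTail]
    intro π
    obtain ⟨g, g', i, hne, h⟩ := keyInt π
    refine ⟨g, g', i, hne, fun B hB hcard => ?_⟩
    have := h B hB hcard
    simp only [hcast]
    rw [← Int.cast_sum, ← Int.cast_sum]
    exact_mod_cast this
end

section
/- There exists a fair division instance with 5 identical groups of 3 agents each and 9 goods with binary utilities such that no allocation is PROP1 for all agents. Concretely, with goods {1,...,9} and in each group: agent 1 values goods 1–6 at 1 and 7–9 at 0; agent 2 values goods 1–3 and 7–9 at 1 and 4–6 at 0; agent 3 values goods 4–9 at 1 and 1–3 at 0; every partition of the 9 goods into 5 bundles fails PROP1 for some agent. -/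
/-!
The nine goods form three blocks of three, and each block is worthless to one agent type.
Since 9 < 2 · 5, some group receives at most one good, and one of its agents values that
bundle at 0; adding a single good raises her value to at most 1 < 6/5.
-/

open Finset

lemma sum_union_le_card_of_eq_zero {α : Type*} [DecidableEq α] {v : α → ℝ} {S B : Finset α}
    (hv : ∀ a, v a ≤ 1) (hS : ∀ a ∈ S, v a = 0) (hd : Disjoint B S) :
    ∑ a ∈ S ∪ B, v a ≤ #B := by
  rw [sum_union hd.symm, sum_eq_zero hS, zero_add]
  simpa using sum_le_card_nsmul B v 1 fun a _ => hv a

lemma exists_forall_eq_zero_of_card_le_one {ι α : Type*} [Nonempty α] {v : ι → α → ℝ}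
    {S : Finset α} (hS : #S ≤ 1) (hv : ∀ a, ∃ i, v i a = 0) :
    ∃ i, ∀ a ∈ S, v i a = 0 := by
  obtain ⟨x, hx⟩ := card_le_one_iff_subset_singleton.mp hS
  obtain ⟨i, hi⟩ := hv x
  exact ⟨i, fun a ha => (mem_singleton.mp (hx ha)) ▸ hi⟩

def prop1Counterexample : Fin 3 → Fin 9 → ℝ :=
  ![![1, 1, 1, 1, 1, 1, 0, 0, 0],
    ![1, 1, 1, 0, 0, 0, 1, 1, 1],
    ![0, 0, 0, 1, 1, 1, 1, 1, 1]]

lemma prop1Counterexample_le_one (i : Fin 3) (a : Fin 9) : prop1Counterexample i a ≤ 1 := by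
  fin_cases i <;> fin_cases a <;> simp [prop1Counterexample]

lemma prop1Counterexample_exists_eq_zero (a : Fin 9) : ∃ i, prop1Counterexample i a = 0 := by
  fin_cases a
  exacts [⟨2, rfl⟩, ⟨2, rfl⟩, ⟨2, rfl⟩, ⟨1, rfl⟩, ⟨1, rfl⟩, ⟨1, rfl⟩, ⟨0, rfl⟩, ⟨0, rfl⟩,
    ⟨0, rfl⟩]

lemma sum_prop1Counterexample (i : Fin 3) : ∑ a, prop1Counterexample i a = 6 := by
  fin_cases i <;> simp [prop1Counterexample, Fin.sum_univ_succ] <;> norm_num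

/-- There is a concrete instance with 5 identical groups of 3 agents and 9 goods
with binary utilities in which no allocation is PROP1 for all agents. -/
theorem stmt_2 :
    ∃ v : Fin 3 → Fin 9 → ℝ,
      v = ![![1, 1, 1, 1, 1, 1, 0, 0, 0],
            ![1, 1, 1, 0, 0, 0, 1, 1, 1],
            ![0, 0, 0, 1, 1, 1, 1, 1, 1]] ∧
      ∀ π : Fin 9 → Fin 5, ∃ (g : Fin 5) (i : Fin 3),
        ∀ B : Finset (Fin 9),
          Disjoint B (Finset.univ.filter (fun a => π a = g)) → B.card ≤ 1 →
          ∑ a ∈ Finset.univ.filter (fun a => π a = g) ∪ B, v i a <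
            (∑ a, v i a) / 5 := by
  refine ⟨prop1Counterexample, rfl, fun π => ?_⟩
  obtain ⟨g, hg⟩ := Fintype.exists_card_fiber_lt_of_card_lt_mul (f := π) (n := 2) (by simp)
  obtain ⟨i, hi⟩ := exists_forall_eq_zero_of_card_le_one (Nat.lt_succ_iff.mp hg)
    prop1Counterexample_exists_eq_zero
  refine ⟨g, i, fun B hd hB => ?_⟩
  calc ∑ a ∈ univ.filter (fun a => π a = g) ∪ B, prop1Counterexample i a
      ≤ #B := sum_union_le_card_of_eq_zero (prop1Counterexample_le_one i) hi hd
    _ ≤ 1 := by exact_mod_cast hB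
    _ < (∑ a, prop1Counterexample i a) / 5 := by rw [sum_prop1Counterexample]; norm_num
end

section
/- In the 5-group counterexample instance (9 goods, binary utilities as specified), in any allocation of the 9 goods among 5 groups, some group receives at most one good, and any single good has value 0 for at least one of the three agents in any group; hence that agent receives total value 0 and cannot achieve PROP1 since their proportional share 6/5 exceeds 1, the maximum value addable by one good. -/
/-! Five groups share nine goods, so by pigeonhole some group gets at most one good. Every good is
worthless to one of the three agent types, so some agent of that group values its bundle at 0.
Adding one good of value at most 1 cannot lift this agent to the proportional share 9 · (2/3) / 5
= 6/5. -/

open Finset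

def counterexampleValuation : Fin 3 → Fin 9 → ℝ :=
  ![![1, 1, 1, 1, 1, 1, 0, 0, 0],
    ![1, 1, 1, 0, 0, 0, 1, 1, 1],
    ![0, 0, 0, 1, 1, 1, 1, 1, 1]]

lemma counterexampleValuation_le_one (i : Fin 3) (a : Fin 9) :
    counterexampleValuation i a ≤ 1 := by
  fin_cases i <;> fin_cases a <;> simp [counterexampleValuation]

lemma exists_counterexampleValuation_eq_zero (a : Fin 9) :
    ∃ i, counterexampleValuation i a = 0 := by
  fin_cases a <;> simp [counterexampleValuation, Fin.exists_fin_succ]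

lemma Fintype.exists_card_fiber_le_one_of_card_lt_two_mul {α β : Type*} [Fintype α] [Fintype β]
    [DecidableEq β] (f : α → β) (h : Fintype.card α < Fintype.card β * 2) :
    ∃ y, #{x | f x = y} ≤ 1 := by
  obtain ⟨y, hy⟩ := Fintype.exists_card_fiber_lt_of_card_lt_mul (f := f) h
  exact ⟨y, Nat.le_of_lt_succ hy⟩

lemma Finset.exists_sum_eq_zero_of_card_le_one {ι α R : Type*} [Nonempty ι] [AddCommMonoid R]
    {v : ι → α → R} (hv : ∀ a, ∃ i, v i a = 0) {s : Finset α} (hs : #s ≤ 1) :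
    ∃ i, ∑ a ∈ s, v i a = 0 := by
  rcases Nat.le_one_iff_eq_zero_or_eq_one.mp hs with h | h
  · exact ⟨Classical.arbitrary ι, by simp [card_eq_zero.mp h]⟩
  · obtain ⟨x, rfl⟩ := card_eq_one.mp h
    simpa using hv x

lemma Finset.sum_le_one_of_card_le_one {α : Type*} {f : α → ℝ} (hf : ∀ a, f a ≤ 1)
    {s : Finset α} (hs : #s ≤ 1) : ∑ a ∈ s, f a ≤ 1 :=
  calc ∑ a ∈ s, f a ≤ #s • (1 : ℝ) := sum_le_card_nsmul s f 1 fun a _ => hf a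
    _ ≤ 1 := by simpa using (Nat.cast_le (α := ℝ)).mpr hs

/-- In the 5-group, 9-good counterexample instance: in any allocation some group
receives at most one good, any single good has value 0 for some agent of any group,
and hence some agent gets bundle value 0 and fails PROP1 (share 6/5). -/
theorem stmt_3 (v : Fin 3 → Fin 9 → ℝ)
    (hv : v = ![![1, 1, 1, 1, 1, 1, 0, 0, 0],
                ![1, 1, 1, 0, 0, 0, 1, 1, 1],
                ![0, 0, 0, 1, 1, 1, 1, 1, 1]]) :
    ∀ π : Fin 9 → Fin 5,
      (∃ g : Fin 5, (Finset.univ.filter (fun a => π a = g)).card ≤ 1) ∧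
      (∀ α : Fin 9, ∃ i : Fin 3, v i α = 0) ∧
      (∃ (g : Fin 5) (i : Fin 3),
        (∑ a ∈ Finset.univ.filter (fun a => π a = g), v i a) = 0 ∧
        ∀ B : Finset (Fin 9),
          Disjoint B (Finset.univ.filter (fun a => π a = g)) → B.card ≤ 1 →
          ∑ a ∈ Finset.univ.filter (fun a => π a = g) ∪ B, v i a < 6 / 5) := by
  change v = counterexampleValuation at hv
  subst hv
  intro π
  obtain ⟨g, hg⟩ := Fintype.exists_card_fiber_le_one_of_card_lt_two_mul π (by simp)
  obtain ⟨i, hi⟩ := exists_sum_eq_zero_of_card_le_one exists_counterexampleValuation_eq_zero hg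
  refine ⟨⟨g, hg⟩, exists_counterexampleValuation_eq_zero, g, i, hi, fun B hdisj hB => ?_⟩
  rw [sum_union hdisj.symm, hi, zero_add]
  linarith [sum_le_one_of_card_le_one (counterexampleValuation_le_one i) hB]
end

section
/- Suppose an agent with additive nonnegative utility u over m goods (with n dividing m) partitions the goods into m/n 'segments' of size n, where the first segment contains their n most valued goods, the second the next n, etc. Then any bundle containing exactly one good from each segment, together with at most one additional good, attains value at least u(M)/n; i.e., such a bundle is PROP1 for the agent when there are n groups. -/
/-- Segment lemma: with goods sorted decreasingly and partitioned into `q` segments of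
size `n`, any bundle containing exactly one good from each segment, plus at most one
additional good, attains value at least `u(M)/n`. -/
theorem stmt_4 (n q : ℕ) (hn : 0 < n) (u : Fin (q * n) → ℝ)
    (hnn : ∀ a, 0 ≤ u a)
    (hsorted : ∀ a b : Fin (q * n), a ≤ b → u b ≤ u a)
    (B : Finset (Fin (q * n)))
    (hseg : ∀ j : Fin q,
      (B.filter (fun a : Fin (q * n) => (j : ℕ) * n ≤ (a : ℕ) ∧ (a : ℕ) < ((j : ℕ) + 1) * n)).card = 1) :
    ∃ C : Finset (Fin (q * n)), Disjoint C B ∧ C.card ≤ 1 ∧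
      (∑ a, u a) / n ≤ ∑ a ∈ B ∪ C, u a := by
  classical
  by_cases hBuniv : B = Finset.univ
  · refine ⟨∅, Finset.disjoint_empty_left _, by simp, ?_⟩
    rw [Finset.union_empty, hBuniv]
    have h0 : (0:ℝ) ≤ ∑ a, u a := Finset.sum_nonneg fun a _ => hnn a
    exact div_le_self h0 (by exact_mod_cast hn)
  · have hne : (Bᶜ).Nonempty := by
      rw [Finset.nonempty_iff_ne_empty]
      intro h; exact hBuniv ((Finset.compl_eq_empty_iff B).mp h)
    set k := (Bᶜ).min' hne with hkdef
    have hkB : k ∉ B := by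
      have := Finset.min'_mem _ hne; simpa using this
    have hkmin : ∀ a : Fin (q*n), a ∉ B → (k:ℕ) ≤ (a:ℕ) := fun a ha =>
      Finset.min'_le _ _ (Finset.mem_compl.mpr ha)
    -- q positive
    have hq : q ≠ 0 := by
      have := k.2
      rintro rfl; simp at this
    -- extract the unique element of each segment
    have hb' : ∀ j : Fin q, ∃ x : Fin (q*n),
        x ∈ B ∧ (j:ℕ)*n ≤ (x:ℕ) ∧ (x:ℕ) < ((j:ℕ)+1)*n ∧
        ∀ y ∈ B, (j:ℕ)*n ≤ (y:ℕ) → (y:ℕ) < ((j:ℕ)+1)*n → y = x := by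
      intro j
      obtain ⟨x, hx⟩ := Finset.card_eq_one.mp (hseg j)
      have hxmem : x ∈ B.filter (fun a : Fin (q*n) =>
          (j:ℕ)*n ≤ (a:ℕ) ∧ (a:ℕ) < ((j:ℕ)+1)*n) := by
        rw [hx]; exact Finset.mem_singleton_self x
      rw [Finset.mem_filter] at hxmem
      refine ⟨x, hxmem.1, hxmem.2.1, hxmem.2.2, ?_⟩
      intro y hyB h1 h2
      have : y ∈ B.filter (fun a : Fin (q*n) =>
          (j:ℕ)*n ≤ (a:ℕ) ∧ (a:ℕ) < ((j:ℕ)+1)*n) :=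
        Finset.mem_filter.mpr ⟨hyB, h1, h2⟩
      rw [hx, Finset.mem_singleton] at this
      exact this
    choose b hbB hb1 hb2 hbu using hb'
    -- b is injective
    have hdiv : ∀ (j : Fin q) (a : Fin (q*n)),
        ((j:ℕ)*n ≤ (a:ℕ) ∧ (a:ℕ) < ((j:ℕ)+1)*n) ↔ (a:ℕ)/n = (j:ℕ) := by
      intro j a
      constructor
      · rintro ⟨h1, h2⟩
        have l1 : (j:ℕ) ≤ (a:ℕ)/n := (Nat.le_div_iff_mul_le hn).mpr h1
        have l2 : (a:ℕ)/n < (j:ℕ)+1 := (Nat.div_lt_iff_lt_mul hn).mpr h2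
        omega
      · intro h
        have l1 : (j:ℕ) ≤ (a:ℕ)/n := h.ge
        have l2 : (a:ℕ)/n < (j:ℕ)+1 := by omega
        exact ⟨(Nat.le_div_iff_mul_le hn).mp l1, (Nat.div_lt_iff_lt_mul hn).mp l2⟩
    have hbinj : Function.Injective b := by
      intro j j' h
      have e1 : ((b j : ℕ))/n = (j:ℕ) := (hdiv j (b j)).mp ⟨hb1 j, hb2 j⟩
      have e2 : ((b j' : ℕ))/n = (j':ℕ) := (hdiv j' (b j')).mp ⟨hb1 j', hb2 j'⟩
      rw [h] at e1
      exact Fin.ext (e1 ▸ e2.symm).symm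
    -- segments
    set S : Fin q → Finset (Fin (q*n)) := fun j =>
      Finset.univ.filter (fun a : Fin (q*n) => (j:ℕ)*n ≤ (a:ℕ) ∧ (a:ℕ) < ((j:ℕ)+1)*n)
      with hS
    have hScard : ∀ j, (S j).card ≤ n := by
      intro j
      have : ∀ a ∈ S j, (a:ℕ) - (j:ℕ)*n ∈ Finset.range n := by
        intro a ha
        rw [hS, Finset.mem_filter] at ha
        have := ha.2
        rw [Finset.mem_range]
        have : (a:ℕ) < (j:ℕ)*n + n := by
          have := this.2; nlinarith [this]
        omega
      have hinj : Set.InjOn (fun a : Fin (q*n) => (a:ℕ) - (j:ℕ)*n) (S j) := by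
        intro a ha a' ha' h
        rw [Finset.mem_coe, hS, Finset.mem_filter] at ha ha'
        have h1 := ha.2.1; have h2 := ha'.2.1
        have hh : (a:ℕ) - (j:ℕ)*n = (a':ℕ) - (j:ℕ)*n := h
        exact Fin.ext (by omega)
      simpa using Finset.card_le_card_of_injOn _ this hinj
    -- the "cover" element for each segment
    set c : Fin q → Fin (q*n) := fun j =>
      if h : (j:ℕ) = 0 then k else b ⟨(j:ℕ)-1, by omega⟩ with hc
    have hcle : ∀ (j : Fin q) (a : Fin (q*n)), a ∈ S j → a ≠ b j → ((c j : ℕ) ≤ (a:ℕ)) := by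
      intro j a ha hne
      rw [hS, Finset.mem_filter] at ha
      obtain ⟨-, h1, h2⟩ := ha
      rw [hc]
      by_cases h0 : (j:ℕ) = 0
      · simp only [h0, dif_pos]
        have haB : a ∉ B := fun hmem => hne (hbu j a hmem h1 h2)
        exact hkmin a haB
      · simp only [h0, dif_neg, not_false_iff]
        set j' : Fin q := ⟨(j:ℕ)-1, by omega⟩ with hj'
        have := hb2 j'
        have hj'v : (j':ℕ) = (j:ℕ) - 1 := rfl
        have : ((b j' : ℕ)) < ((j:ℕ)-1+1)*n := by rw [← hj'v]; exact this
        have hle : ((j:ℕ)-1+1)*n ≤ (j:ℕ)*n := Nat.mul_le_mul_right n (by omega)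
        omega
    -- per-segment sum bound
    have hsegsum : ∀ j : Fin q, ∑ a ∈ S j, u a ≤ u (b j) + ((n:ℝ)-1) * u (c j) := by
      intro j
      have hbmem : b j ∈ S j := by
        rw [hS, Finset.mem_filter]; exact ⟨Finset.mem_univ _, hb1 j, hb2 j⟩
      rw [← Finset.add_sum_erase _ _ hbmem]
      have herase : ∑ a ∈ (S j).erase (b j), u a ≤ ((S j).erase (b j)).card • u (c j) := by
        apply Finset.sum_le_card_nsmul
        intro a ha
        rw [Finset.mem_erase] at ha
        exact hsorted (c j) a (Fin.le_def.mpr (hcle j a ha.2 ha.1))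
      have hcardle : ((S j).erase (b j)).card ≤ n - 1 := by
        rw [Finset.card_erase_of_mem hbmem]
        have := hScard j; omega
      have : (((S j).erase (b j)).card : ℝ) * u (c j) ≤ ((n:ℝ)-1) * u (c j) := by
        apply mul_le_mul_of_nonneg_right _ (hnn _)
        have : (((S j).erase (b j)).card : ℝ) ≤ ((n-1 : ℕ) : ℝ) := by exact_mod_cast hcardle
        refine this.trans ?_
        rw [Nat.cast_sub hn]; simp
      rw [nsmul_eq_mul] at herase
      linarith [herase.trans this]
    -- total = sum over segments
    have htotal : ∑ a, u a = ∑ j : Fin q, ∑ a ∈ S j, u a := by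
      have hmap : ∀ a : Fin (q*n), a ∈ Finset.univ →
          (⟨(a:ℕ)/n, (Nat.div_lt_iff_lt_mul hn).mpr a.2⟩ : Fin q) ∈ Finset.univ :=
        fun a _ => Finset.mem_univ _
      have := Finset.sum_fiberwise_of_maps_to hmap u
      rw [← this]
      apply Finset.sum_congr rfl
      intro j _
      apply Finset.sum_congr _ (fun _ _ => rfl)
      rw [hS]
      ext a
      simp only [Finset.mem_filter, Finset.mem_univ, true_and]
      rw [hdiv j a, Fin.ext_iff]
    -- sum of c ≤ u k + sum of b
    have hcsum : ∑ j : Fin q, u (c j) ≤ u k + ∑ j : Fin q, u (b j) := by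
      have hcinj : Function.Injective c := by
        intro j j' h
        rw [hc] at h
        by_cases h0 : (j:ℕ) = 0 <;> by_cases h0' : (j':ℕ) = 0
        · exact Fin.ext (by omega)
        · simp only [h0, h0', dif_pos, dif_neg, not_false_iff] at h
          exact absurd (h ▸ hbB _) hkB
        · simp only [h0, h0', dif_pos, dif_neg, not_false_iff] at h
          exact absurd (h ▸ hkB) (by simp [hbB])
        · simp only [h0, h0', dif_neg, not_false_iff] at h
          have := hbinj h
          rw [Fin.ext_iff] at this ⊢
          simp only [] at this
          omega
      rw [← Finset.sum_image (f := u) (g := c) (fun x _ y _ h => hcinj h)]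
      have hsub : Finset.univ.image c ⊆ insert k (Finset.univ.image b) := by
        intro x hx
        rw [Finset.mem_image] at hx
        obtain ⟨j, -, rfl⟩ := hx
        rw [hc]
        by_cases h0 : (j:ℕ) = 0
        · simp [h0]
        · simp only [h0, dif_neg, not_false_iff]
          exact Finset.mem_insert_of_mem (Finset.mem_image_of_mem b (Finset.mem_univ _))
      refine (Finset.sum_le_sum_of_subset_of_nonneg hsub (fun a _ _ => hnn a)).trans ?_
      have hknotim : k ∉ Finset.univ.image b := by
        rw [Finset.mem_image]
        rintro ⟨j, -, hj⟩
        exact hkB (hj ▸ hbB j)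
      rw [Finset.sum_insert hknotim]
      have : ∑ a ∈ Finset.univ.image b, u a = ∑ j : Fin q, u (b j) :=
        Finset.sum_image (fun x _ y _ h => hbinj h)
      rw [this]
    -- sum of b ≤ sum over B
    have hbsum : ∑ j : Fin q, u (b j) ≤ ∑ a ∈ B, u a := by
      rw [← Finset.sum_image (f := u) (g := b) (fun x _ y _ h => hbinj h)]
      apply Finset.sum_le_sum_of_subset_of_nonneg _ (fun a _ _ => hnn a)
      intro x hx
      rw [Finset.mem_image] at hx
      obtain ⟨j, -, rfl⟩ := hx
      exact hbB j
    -- combine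
    refine ⟨{k}, by simpa using hkB, by simp, ?_⟩
    have hunion : ∑ a ∈ B ∪ {k}, u a = u k + ∑ a ∈ B, u a := by
      rw [Finset.union_comm, ← Finset.insert_eq, Finset.sum_insert hkB]
    rw [div_le_iff₀ (by exact_mod_cast hn), hunion]
    have key : ∑ a, u a ≤ ∑ j : Fin q, u (b j) + ((n:ℝ)-1) * ∑ j : Fin q, u (c j) := by
      rw [htotal]
      calc ∑ j : Fin q, ∑ a ∈ S j, u a
          ≤ ∑ j : Fin q, (u (b j) + ((n:ℝ)-1) * u (c j)) :=
            Finset.sum_le_sum (fun j _ => hsegsum j)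
        _ = ∑ j : Fin q, u (b j) + ((n:ℝ)-1) * ∑ j : Fin q, u (c j) := by
            rw [Finset.sum_add_distrib, Finset.mul_sum]
    have hn1 : (1:ℝ) ≤ (n:ℝ) := by exact_mod_cast hn
    have hck : (0:ℝ) ≤ ∑ j : Fin q, u (c j) := Finset.sum_nonneg (fun j _ => hnn _)
    have huk : (0:ℝ) ≤ u k := hnn k
    nlinarith [key, hcsum, hbsum]
end

section
/- For an agent with additive nonnegative utility whose segment partition divides the m goods into m/n segments of n goods each (sorted by the agent's values), any allocation into n bundles in which every bundle contains exactly one good from each segment is EF1 for that agent: the agent's value for their own group's bundle is at least their value for any other bundle after removing that bundle's good from the first segment. -/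
/-- Segment EF1 lemma: if every bundle of an allocation into `n` bundles contains exactly
one good from each of the agent's `q` segments (goods sorted decreasingly), then the
allocation is EF1 for that agent: their own bundle is worth at least any other bundle
after removing that bundle's good from the first segment. -/
theorem stmt_5 (n q : ℕ) (u : Fin (q * n) → ℝ)
    (hnn : ∀ a, 0 ≤ u a)
    (hsorted : ∀ a b : Fin (q * n), a ≤ b → u b ≤ u a)
    (B : Fin n → Finset (Fin (q * n)))
    (hseg : ∀ (g : Fin n) (j : Fin q),
      ((B g).filter (fun a : Fin (q * n) => (j : ℕ) * n ≤ (a : ℕ) ∧ (a : ℕ) < ((j : ℕ) + 1) * n)).card = 1)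
    (g : Fin n) :
    ∀ g' : Fin n, g' ≠ g → ∀ β ∈ B g', (β : ℕ) < n →
      ∑ a ∈ B g' \ {β}, u a ≤ ∑ a ∈ B g, u a := by
  intro g' _ β hβ hβn
  have hn : 0 < n := g.pos
  have hq : 0 < q := by
    have := β.isLt
    by_contra h
    push_neg at h
    interval_cases q <;> omega
  -- extract singleton elements
  have hx : ∀ (k : Fin n) (j : Fin q), ∃ x : Fin (q*n),
      ((B k).filter (fun a : Fin (q*n) => (j:ℕ)*n ≤ (a:ℕ) ∧ (a:ℕ) < ((j:ℕ)+1)*n)) = {x} :=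
    fun k j => Finset.card_eq_one.mp (hseg k j)
  choose x hxspec using hx
  have hxall : ∀ k j, x k j ∈ B k ∧ (j:ℕ)*n ≤ (x k j : ℕ) ∧ (x k j : ℕ) < ((j:ℕ)+1)*n := by
    intro k j
    have h : x k j ∈ (B k).filter (fun a : Fin (q*n) => (j:ℕ)*n ≤ (a:ℕ) ∧ (a:ℕ) < ((j:ℕ)+1)*n) := by
      rw [hxspec k j]; exact Finset.mem_singleton_self _
    have := Finset.mem_filter.mp h
    exact ⟨this.1, this.2.1, this.2.2⟩
  -- fiber map
  set f : Fin (q*n) → Fin q := fun a => ⟨(a:ℕ)/n, (Nat.div_lt_iff_lt_mul hn).mpr a.isLt⟩ with hf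
  have hfiber : ∀ (a : Fin (q*n)) (j : Fin q),
      f a = j ↔ ((j:ℕ)*n ≤ (a:ℕ) ∧ (a:ℕ) < ((j:ℕ)+1)*n) := by
    intro a j
    have h1 : (j:ℕ)*n ≤ (a:ℕ) ↔ (j:ℕ) ≤ (a:ℕ)/n := (Nat.le_div_iff_mul_le hn).symm
    have h2 : (a:ℕ) < ((j:ℕ)+1)*n ↔ (a:ℕ)/n < (j:ℕ)+1 := (Nat.div_lt_iff_lt_mul hn).symm
    constructor
    · intro h
      have : (a:ℕ)/n = (j:ℕ) := by rw [hf] at h; exact congrArg Fin.val h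
      omega
    · intro h
      have := h1.mp h.1
      have := h2.mp h.2
      apply Fin.ext
      simp only [hf]
      omega
  have hfilt : ∀ (k : Fin n) (j : Fin q),
      (B k).filter (fun a => f a = j) = {x k j} := by
    intro k j
    rw [← hxspec k j]
    apply Finset.filter_congr
    intro a _
    simp [hfiber a j]
  -- sum over B g
  have hsumg : ∑ a ∈ B g, u a = ∑ j : Fin q, u (x g j) := by
    rw [← Finset.sum_fiberwise (B g) f u]
    refine Finset.sum_congr rfl (fun j _ => ?_)
    rw [hfilt g j, Finset.sum_singleton]
  -- β = x g' 0
  have hfβ : f β = ⟨0, hq⟩ := by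
    rw [hfiber]
    simpa using hβn
  have hβx : β = x g' ⟨0, hq⟩ := by
    have : β ∈ (B g').filter (fun a => f a = ⟨0, hq⟩) :=
      Finset.mem_filter.mpr ⟨hβ, hfβ⟩
    rw [hfilt] at this
    exact Finset.mem_singleton.mp this
  -- sum over B g' \ {β}
  have hsumg' : ∑ a ∈ B g' \ {β}, u a = ∑ j ∈ Finset.univ.erase ⟨0, hq⟩, u (x g' j) := by
    rw [← Finset.sum_fiberwise (B g' \ {β}) f u]
    have hfib : ∀ j : Fin q, (B g' \ {β}).filter (fun a => f a = j)
        = ((B g').filter (fun a => f a = j)) \ {β} := by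
      intro j
      ext a
      simp only [Finset.mem_filter, Finset.mem_sdiff]
      tauto
    have : ∀ j : Fin q, ∑ a ∈ (B g' \ {β}).filter (fun a => f a = j), u a
        = if j = ⟨0, hq⟩ then 0 else u (x g' j) := by
      intro j
      rw [hfib j, hfilt g' j]
      by_cases h : j = ⟨0, hq⟩
      · subst h
        rw [← hβx]
        simp
      · have : x g' j ≠ β := by
          intro he
          apply h
          have := hxall g' j
          have h0 : (x g' j : ℕ) < n := he ▸ hβn
          apply Fin.ext
          simp only
          nlinarith [this.2.1]
        rw [Finset.sdiff_eq_self_of_disjoint (Finset.disjoint_singleton.mpr this)]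
        simp [h]
    rw [Finset.sum_congr rfl (fun j _ => this j)]
    rw [← Finset.add_sum_erase _ _ (Finset.mem_univ ⟨0, hq⟩), if_pos rfl, zero_add]
    refine Finset.sum_congr rfl (fun j hj => ?_)
    rw [if_neg (Finset.mem_erase.mp hj).1]
  rw [hsumg, hsumg']
  set p : Fin q → Fin q := fun j => ⟨(j:ℕ)-1, lt_of_le_of_lt (Nat.sub_le _ _) j.isLt⟩ with hp
  calc ∑ j ∈ Finset.univ.erase ⟨0, hq⟩, u (x g' j)
      ≤ ∑ j ∈ Finset.univ.erase ⟨0, hq⟩, u (x g (p j)) := by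
        refine Finset.sum_le_sum (fun j hj => ?_)
        have hj1 : 1 ≤ (j:ℕ) := by
          have := (Finset.mem_erase.mp hj).1
          rcases Nat.pos_of_ne_zero (fun h => this (Fin.ext h)) with h
          omega
        refine hsorted _ _ ?_
        rw [Fin.le_def]
        have h1 := (hxall g (p j)).2.2
        have h2 := (hxall g' j).2.1
        have hpv : ((p j : ℕ)+1) = (j:ℕ) := by simp [hp]; omega
        rw [hpv] at h1
        omega
    _ = ∑ i ∈ (Finset.univ.erase ⟨0, hq⟩).image p, u (x g i) := by
        rw [Finset.sum_image]
        intro a ha b hb hab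
        have ha1 : 1 ≤ (a:ℕ) := by
          have := (Finset.mem_erase.mp ha).1
          rcases Nat.pos_of_ne_zero (fun h => this (Fin.ext h)) with h; omega
        have hb1 : 1 ≤ (b:ℕ) := by
          have := (Finset.mem_erase.mp hb).1
          rcases Nat.pos_of_ne_zero (fun h => this (Fin.ext h)) with h; omega
        have := congrArg Fin.val hab
        simp only [hp] at this
        exact Fin.ext (by omega)
    _ ≤ ∑ j : Fin q, u (x g j) := by
        refine Finset.sum_le_sum_of_subset_of_nonneg (Finset.subset_univ _) ?_
        intro i _ _
        exact hnn _
end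

section
/- If the m goods can be sorted in decreasing value order simultaneously for both agent (g,1) and agent (g,2) segment-wise (formally: the segment partitions of both agents coincide for every group g, with m divisible by n), then a PROP1 allocation among the n groups always exists: one can pick for each group one good from each of its m/n common segments so that all bundles partition M. -/
open Finset

lemma seg_prop1 (n q : ℕ) (hn : 0 < n) (f : Fin (q * n) → ℝ)
    (hnn : ∀ a, 0 ≤ f a)
    (s : Fin (q * n) → Fin q)
    (hsize : ∀ j : Fin q, (univ.filter (fun a => s a = j)).card = n)
    (hsorted : ∀ a b, s a < s b → f b ≤ f a)
    (b : Fin q → Fin (q * n)) (hb : ∀ j, s (b j) = j) :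
    ∃ C : Finset (Fin (q * n)), Disjoint C (univ.image b) ∧ C.card ≤ 1 ∧
      (∑ a, f a) / n ≤ ∑ a ∈ univ.image b ∪ C, f a := by
  have hbinj : Function.Injective b := fun j1 j2 h => by
    rw [← hb j1, ← hb j2, h]
  have hsumb : ∑ a ∈ univ.image b, f a = ∑ j, f (b j) :=
    Finset.sum_image (fun x _ y _ h => hbinj h)
  have hnpos : (0:ℝ) < n := by exact_mod_cast hn
  have htotal : ∑ a, f a = ∑ j, ∑ a ∈ univ.filter (fun a => s a = j), f a :=
    (Finset.sum_fiberwise univ s f).symm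
  by_cases h : ∀ j, ∀ a, s a = j → f a ≤ f (b j)
  · -- every b j is a max of its segment
    refine ⟨∅, by simp, by simp, ?_⟩
    rw [div_le_iff₀ hnpos, union_empty, hsumb, htotal]
    rw [Finset.sum_mul]
    refine Finset.sum_le_sum fun j _ => ?_
    calc ∑ a ∈ univ.filter (fun a => s a = j), f a
        ≤ (univ.filter (fun a => s a = j)).card • f (b j) :=
          Finset.sum_le_card_nsmul _ _ _ (fun a ha => h j a (mem_filter.mp ha).2)
      _ = f (b j) * n := by rw [hsize j, nsmul_eq_mul, mul_comm]
  · push_neg at h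
    -- T : set of "bad" segments
    set T : Finset (Fin q) := univ.filter (fun j => ∃ a, s a = j ∧ f (b j) < f a) with hT
    have hTne : T.Nonempty := by
      obtain ⟨j, a, ha, hlt⟩ := h
      exact ⟨j, by simp [hT]; exact ⟨a, ha, hlt⟩⟩
    set j₀ : Fin q := T.min' hTne with hj₀
    have hj₀T : j₀ ∈ T := T.min'_mem hTne
    obtain ⟨a₀, ha₀, hlt₀⟩ : ∃ a, s a = j₀ ∧ f (b j₀) < f a := by
      have := hj₀T; rw [hT, mem_filter] at this; exact this.2
    -- c : a maximizer of f on segment j₀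
    have hsegne : (univ.filter (fun a => s a = j₀)).Nonempty := ⟨a₀, by simpa using ha₀⟩
    obtain ⟨c, hcmem, hcmax⟩ := Finset.exists_max_image _ f hsegne
    have hcseg : s c = j₀ := (mem_filter.mp hcmem).2
    have hclt : f (b j₀) < f c := lt_of_lt_of_le hlt₀ (hcmax a₀ (by simpa using ha₀))
    have hcnot : c ∉ univ.image b := by
      simp only [mem_image, mem_univ, true_and]
      rintro ⟨j, rfl⟩
      have : j = j₀ := by rw [← hb j, hcseg]
      exact absurd hclt (by rw [this]; exact lt_irrefl _)
    -- the shift map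
    have hφlt : ∀ j : Fin q, j.val - 1 < q := fun j => lt_of_le_of_lt (Nat.sub_le _ _) j.isLt
    set φ : Fin q → Fin q := fun j => if j.val < j₀.val then j else ⟨j.val - 1, hφlt j⟩ with hφ
    -- segments below j₀ are good
    have hgood : ∀ j : Fin q, j.val < j₀.val → ∀ a, s a = j → f a ≤ f (b j) := by
      intro j hjlt a ha
      by_contra hcon
      push_neg at hcon
      have hjT : j ∈ T := by rw [hT, mem_filter]; exact ⟨mem_univ _, a, ha, hcon⟩
      exact absurd (T.min'_le j hjT) (by
        intro hle
        exact absurd hjlt (not_lt.mpr hle))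
    -- key per-segment bound
    have hbound : ∀ j : Fin q, ∑ a ∈ univ.filter (fun a => s a = j), f a ≤
        (if j = j₀ then f c else f (b (φ j))) * n := by
      intro j
      rcases eq_or_ne j j₀ with heq | hne
      · rw [if_pos heq, heq]
        calc ∑ a ∈ univ.filter (fun a => s a = j₀), f a
            ≤ (univ.filter (fun a => s a = j₀)).card • f c :=
              Finset.sum_le_card_nsmul _ _ _ (fun a ha => hcmax a ha)
          _ = f c * n := by rw [hsize j₀, nsmul_eq_mul, mul_comm]
      · rw [if_neg hne]
        have : ∀ a ∈ univ.filter (fun a => s a = j), f a ≤ f (b (φ j)) := by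
          intro a ha
          have ha' : s a = j := (mem_filter.mp ha).2
          rcases lt_or_ge j.val j₀.val with hlt | hge
          · rw [hφ]; simp only [if_pos hlt]
            exact hgood j hlt a ha'
          · have hgt : j₀.val < j.val :=
              lt_of_le_of_ne hge (fun hh => hne (Fin.ext hh.symm))
            rw [hφ]; simp only [if_neg (not_lt.mpr hge)]
            apply hsorted
            rw [ha', hb]
            simp only [Fin.lt_def, Fin.val_mk]
            omega
        calc ∑ a ∈ univ.filter (fun a => s a = j), f a
            ≤ (univ.filter (fun a => s a = j)).card • f (b (φ j)) :=
              Finset.sum_le_card_nsmul _ _ _ this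
          _ = f (b (φ j)) * n := by rw [hsize j, nsmul_eq_mul, mul_comm]
    refine ⟨{c}, by simpa using hcnot, by simp, ?_⟩
    rw [div_le_iff₀ hnpos, htotal]
    have step1 : ∑ j, ∑ a ∈ univ.filter (fun a => s a = j), f a ≤
        (∑ j, if j = j₀ then f c else f (b (φ j))) * n := by
      rw [Finset.sum_mul]
      exact Finset.sum_le_sum fun j _ => hbound j
    refine step1.trans (mul_le_mul_of_nonneg_right ?_ hnpos.le)
    -- split off j₀
    rw [← Finset.add_sum_erase _ _ (mem_univ j₀), if_pos rfl]
    have step2 : ∑ j ∈ univ.erase j₀, (if j = j₀ then f c else f (b (φ j))) =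
        ∑ j ∈ univ.erase j₀, f (b (φ j)) := by
      refine Finset.sum_congr rfl fun j hj => ?_
      rw [if_neg (mem_erase.mp hj).1]
    rw [step2]
    have hφinj : ∀ x ∈ univ.erase j₀, ∀ y ∈ univ.erase j₀, φ x = φ y → x = y := by
      intro x hx y hy hxy
      have hx' : x ≠ j₀ := (mem_erase.mp hx).1
      have hy' : y ≠ j₀ := (mem_erase.mp hy).1
      have hx'' : x.val ≠ j₀.val := fun hh => hx' (Fin.ext hh)
      have hy'' : y.val ≠ j₀.val := fun hh => hy' (Fin.ext hh)
      have hx1 : (φ x).val = if x.val < j₀.val then x.val else x.val - 1 := by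
        simp only [hφ]; split <;> rfl
      have hy1 : (φ y).val = if y.val < j₀.val then y.val else y.val - 1 := by
        simp only [hφ]; split <;> rfl
      have hkey : (if x.val < j₀.val then x.val else x.val - 1) =
          (if y.val < j₀.val then y.val else y.val - 1) := by
        rw [← hx1, ← hy1, hxy]
      apply Fin.ext
      split_ifs at hkey <;> omega
    have step3 : ∑ j ∈ univ.erase j₀, f (b (φ j)) =
        ∑ k ∈ (univ.erase j₀).image φ, f (b k) :=
      (Finset.sum_image (f := fun k => f (b k)) hφinj).symm
    rw [step3]
    have step4 : ∑ k ∈ (univ.erase j₀).image φ, f (b k) ≤ ∑ k, f (b k) :=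
      Finset.sum_le_sum_of_subset_of_nonneg (subset_univ _) (fun k _ _ => hnn _)
    have hsum_union : ∑ a ∈ univ.image b ∪ {c}, f a = ∑ j, f (b j) + f c := by
      rw [Finset.sum_union (by simpa using hcnot), hsumb, Finset.sum_singleton]
    rw [hsum_union]
    linarith

/-- If, in every couple, both agents induce the same segment partition of the `q*n` goods
into `q` segments of size `n` (ordered by value), then a PROP1 allocation among the `n`
groups exists: each group can receive exactly one good from each of its segments so that
the bundles partition the goods, and every agent is PROP1. -/
theorem stmt_6 (n q : ℕ) (hn : 0 < n)
    (u : Fin n → Fin 2 → Fin (q * n) → ℝ)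
    (hnn : ∀ g i a, 0 ≤ u g i a)
    (seg : Fin n → Fin (q * n) → Fin q)
    (hsize : ∀ (g : Fin n) (j : Fin q),
      (Finset.univ.filter (fun a => seg g a = j)).card = n)
    (hsorted : ∀ (g : Fin n) (i : Fin 2) (a b : Fin (q * n)),
      seg g a < seg g b → u g i b ≤ u g i a) :
    ∃ B : Fin n → Finset (Fin (q * n)),
      (∀ a : Fin (q * n), ∃! g : Fin n, a ∈ B g) ∧
      (∀ (g : Fin n) (j : Fin q), ((B g).filter (fun a => seg g a = j)).card = 1) ∧
      (∀ (g : Fin n) (i : Fin 2), ∃ C : Finset (Fin (q * n)),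
        Disjoint C (B g) ∧ C.card ≤ 1 ∧
        (∑ a, u g i a) / n ≤ ∑ a ∈ B g ∪ C, u g i a) := by
  classical
  set t : Fin n × Fin q → Finset (Fin (q * n)) :=
    fun p => univ.filter (fun a => seg p.1 a = p.2) with ht
  -- Hall's condition
  have hall : ∀ S : Finset (Fin n × Fin q), S.card ≤ (S.biUnion t).card := by
    intro S
    set N := S.biUnion t with hN
    have hsub : ∀ p ∈ S, t p ⊆ N := fun p hp => subset_biUnion_of_mem t hp
    have h1 : n * S.card = ∑ p ∈ S, (t p).card := by
      rw [Finset.sum_congr rfl (fun p _ => hsize p.1 p.2), Finset.sum_const,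
        smul_eq_mul, mul_comm]
    have h2 : ∑ p ∈ S, (t p).card = ∑ p ∈ S, ∑ a ∈ N, if a ∈ t p then 1 else 0 := by
      refine Finset.sum_congr rfl fun p hp => ?_
      have hfe : N.filter (fun a => a ∈ t p) = t p := by
        ext a
        simp only [mem_filter, and_iff_right_iff_imp]
        exact fun ha => hsub p hp ha
      rw [← hfe, Finset.card_filter]
      simp only [hfe]
    have h3 : ∑ p ∈ S, ∑ a ∈ N, (if a ∈ t p then 1 else 0)
        = ∑ a ∈ N, ∑ p ∈ S, if a ∈ t p then 1 else 0 := Finset.sum_comm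
    have h4 : ∀ a : Fin (q * n), (∑ p ∈ S, if a ∈ t p then 1 else 0) ≤ n := by
      intro a
      rw [← Finset.card_filter]
      calc (S.filter (fun p => a ∈ t p)).card
          ≤ ((univ : Finset (Fin n)).image (fun g => (g, seg g a))).card := by
            apply Finset.card_le_card
            intro p hp
            rw [mem_filter] at hp
            have : seg p.1 a = p.2 := by
              have := hp.2; rw [ht] at this; simpa using this
            rw [mem_image]
            exact ⟨p.1, mem_univ _, by rw [this]⟩
        _ ≤ (univ : Finset (Fin n)).card := Finset.card_image_le
        _ = n := by simp
    have h5 : n * S.card ≤ n * N.card := by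
      rw [h1, h2, h3]
      calc ∑ a ∈ N, ∑ p ∈ S, (if a ∈ t p then 1 else 0)
          ≤ ∑ _a ∈ N, n := Finset.sum_le_sum (fun a _ => h4 a)
        _ = n * N.card := by rw [Finset.sum_const, smul_eq_mul, mul_comm]
    exact Nat.le_of_mul_le_mul_left h5 hn
  obtain ⟨f, hfinj, hft⟩ := (Finset.all_card_le_biUnion_card_iff_exists_injective t).mp hall
  have hfseg : ∀ p : Fin n × Fin q, seg p.1 (f p) = p.2 := by
    intro p
    have := hft p
    rw [ht] at this
    simpa using this
  have hfbij : Function.Bijective f := by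
    rw [Fintype.bijective_iff_injective_and_card]
    exact ⟨hfinj, by simp [mul_comm]⟩
  refine ⟨fun g => univ.image (fun j => f (g, j)), ?_, ?_, ?_⟩
  · intro a
    obtain ⟨p, rfl⟩ := hfbij.2 a
    refine ⟨p.1, ⟨mem_image.mpr ⟨p.2, mem_univ _, rfl⟩, ?_⟩⟩
    intro g hg
    obtain ⟨j, _, hj⟩ := mem_image.mp hg
    exact congrArg Prod.fst (hfinj hj)
  · intro g j
    have : ((univ.image (fun j => f (g, j))).filter (fun a => seg g a = j)) = {f (g, j)} := by
      ext a
      simp only [mem_filter, mem_image, mem_univ, true_and, mem_singleton]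
      constructor
      · rintro ⟨⟨j', rfl⟩, hseg⟩
        have : j' = j := by rw [← hseg, hfseg (g, j')]
        rw [this]
      · rintro rfl
        exact ⟨⟨j, rfl⟩, hfseg (g, j)⟩
    rw [this, Finset.card_singleton]
  · intro g i
    exact seg_prop1 n q hn (u g i) (hnn g i) (seg g) (hsize g) (hsorted g i)
      (fun j => f (g, j)) (fun j => hfseg (g, j))
end

section
/- For n couples (groups of size 2) and m = 2n goods, a PROP1 allocation always exists: one can assign goods so that each agent receives at least one of their n most valued goods (after first satisfying groups where both agents share a good among their top n, then applying Hall's theorem to match remaining agents to remaining goods). -/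
/-!
A bundle containing one of an agent's top `n` goods (out of `2n`) is PROP1: add the best good
`c` outside it, and every remaining good is worth at most `v c`, and at most `v a` unless it is one
of the fewer than `n` goods ranked above `a`, so the other `2n - 2` goods are worth at most
`(n - 1) (v a + v c)`. It therefore suffices to give every agent one of their top `n` goods. If
some good is among the top `n` of both members of a couple, give it to that couple and recurse
on the other couples; otherwise the two top sets of each couple are disjoint and Hall's theorem
matches the agents injectively to goods.
-/

open Finset Function

section TopGoods

variable {α β : Type*} [Fintype α] [LinearOrder β]

/-- The top `k` goods, ties included. -/
def topGoods (v : α → β) (k : ℕ) : Finset α := {a | #{x | v a < v x} < k}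

theorem mem_topGoods {v : α → β} {k : ℕ} {a : α} : a ∈ topGoods v k ↔ #{x | v a < v x} < k := by
  simp [topGoods]

theorem le_card_topGoods (v : α → β) {k : ℕ} (hk : k ≤ Fintype.card α) :
    k ≤ #(topGoods v k) := by
  classical
  by_contra! hlt
  have hne : (topGoods v k)ᶜ.Nonempty := by
    refine nonempty_iff_ne_empty.2 fun h => ?_
    rw [compl_eq_empty_iff] at h
    rw [h, card_univ] at hlt
    omega
  obtain ⟨a, ha, hmax⟩ := exists_max_image _ v hne
  -- everything ranked above a maximal good outside `topGoods` lies inside it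
  have hsub : ({x | v a < v x} : Finset α) ⊆ topGoods v k := fun x hx => by
    by_contra hx'
    exact (mem_filter.1 hx).2.not_ge (hmax x (mem_compl.2 hx'))
  exact mem_compl.1 ha (mem_topGoods.2 ((card_le_card hsub).trans_lt hlt))

end TopGoods

theorem sum_le_mul_add_of_card_filter_lt_le {α : Type*} {s : Finset α} {v : α → ℝ} {t M : ℝ}
    {k : ℕ} (ht : 0 ≤ t) (hM₀ : 0 ≤ M) (hM : ∀ x ∈ s, v x ≤ M)
    (hk : #{x ∈ s | t < v x} ≤ k) (hs : #s ≤ 2 * k) :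
    ∑ x ∈ s, v x ≤ k * (t + M) := by
  set m := min t M
  have hm₀ : 0 ≤ m := le_min ht hM₀
  have hmM : m ≤ M := min_le_right t M
  have hpoint : ∀ x ∈ s, v x ≤ m + if t < v x then M - m else 0 := fun x hx => by
    split_ifs with h
    · linarith [hM x hx]
    · rw [add_zero]
      exact le_min (not_lt.1 h) (hM x hx)
  have hk' : (#{x ∈ s | t < v x} : ℝ) ≤ k := by exact_mod_cast hk
  have hs' : (#s : ℝ) ≤ 2 * k := by exact_mod_cast hs
  calc ∑ x ∈ s, v x ≤ ∑ x ∈ s, (m + if t < v x then M - m else 0) := sum_le_sum hpoint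
    _ = #s * m + #{x ∈ s | t < v x} * (M - m) := by
      rw [sum_add_distrib, ← sum_filter]
      simp [mul_sub]
    _ ≤ 2 * k * m + k * (M - m) := by gcongr
    _ ≤ k * (t + M) := by nlinarith [min_le_left t M, (Nat.cast_nonneg k : (0 : ℝ) ≤ k)]

def IsProp1 {α : Type*} [Fintype α] [DecidableEq α] (v : α → ℝ) (n : ℕ) (B : Finset α) : Prop :=
  ∃ C : Finset α, Disjoint C B ∧ #C ≤ 1 ∧ (∑ x, v x) / n ≤ ∑ x ∈ B ∪ C, v x

theorem isProp1_of_mem_topGoods {α : Type*} [Fintype α] [DecidableEq α] {n : ℕ} (v : α → ℝ)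
    (hv : ∀ x, 0 ≤ v x) (hcard : Fintype.card α ≤ 2 * n) {B : Finset α} {a : α} (haB : a ∈ B)
    (ha : a ∈ topGoods v n) : IsProp1 v n B := by
  have hrank := mem_topGoods.1 ha
  obtain ⟨k, rfl⟩ : ∃ k, n = k + 1 := ⟨n - 1, by omega⟩
  have hn : (0 : ℝ) < (k + 1 : ℕ) := by positivity
  by_cases hB : B = univ
  · refine ⟨∅, disjoint_empty_left B, by simp, ?_⟩
    rw [union_empty, hB]
    exact div_le_self (sum_nonneg fun x _ => hv x) (by simp)
  obtain ⟨c, hcB, hcmax⟩ :=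
    exists_max_image Bᶜ v (nonempty_iff_ne_empty.2 (by rwa [Ne, compl_eq_empty_iff]))
  refine ⟨{c}, disjoint_singleton_left.2 (mem_compl.1 hcB), (card_singleton c).le, ?_⟩
  set S := B ∪ {c}
  have hac : a ≠ c := by rintro rfl; exact mem_compl.1 hcB haB
  have hpair : {a, c} ⊆ S := insert_subset (mem_union_left _ haB) (by simp [S])
  have hSpair : v a + v c ≤ ∑ x ∈ S, v x := by
    rw [← sum_pair hac]
    exact sum_le_sum_of_subset_of_nonneg hpair fun x _ _ => hv x
  have hSc : #Sᶜ ≤ 2 * k := by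
    have := card_le_card hpair
    rw [card_pair hac] at this
    rw [card_compl]
    omega
  have hrest : ∑ x ∈ Sᶜ, v x ≤ k * (v a + v c) := by
    refine sum_le_mul_add_of_card_filter_lt_le (hv a) (hv c) (fun x hx => ?_) ?_ hSc
    · exact hcmax x (mem_compl.2 fun hxB => mem_compl.1 hx (mem_union_left _ hxB))
    · refine Nat.le_of_lt_succ ((card_le_card ?_).trans_lt hrank)
      exact filter_subset_filter _ (subset_univ _)
  rw [div_le_iff₀ hn]
  calc ∑ x, v x = ∑ x ∈ S, v x + ∑ x ∈ Sᶜ, v x := (sum_add_sum_compl S v).symm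
    _ ≤ ∑ x ∈ S, v x + k * ∑ x ∈ S, v x := by
      gcongr
      exact hrest.trans (mul_le_mul_of_nonneg_left hSpair k.cast_nonneg)
    _ = (∑ x ∈ S, v x) * (k + 1 : ℕ) := by push_cast; ring

section Couples

variable {ι α : Type*} [Fintype ι]

theorem exists_injective_mem_of_disjoint (T : ι → Fin 2 → Finset α)
    (hdisj : ∀ g, Disjoint (T g 0) (T g 1)) (hT : ∀ g i, Fintype.card ι ≤ #(T g i)) :
    ∃ f : ι × Fin 2 → α, Injective f ∧ ∀ p, f p ∈ T p.1 p.2 := by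
  classical
  rw [← all_card_le_biUnion_card_iff_exists_injective]
  intro s
  rcases s.eq_empty_or_nonempty with rfl | ⟨p, hp⟩
  · simp
  by_cases hfst : Set.InjOn Prod.fst (s : Set (ι × Fin 2))
  · calc #s = #(s.image Prod.fst) := (card_image_of_injOn hfst).symm
      _ ≤ Fintype.card ι := card_le_univ _
      _ ≤ #(T p.1 p.2) := hT p.1 p.2
      _ ≤ #(s.biUnion fun q => T q.1 q.2) :=
        card_le_card (subset_biUnion_of_mem (fun q => T q.1 q.2) hp)
  rw [Set.InjOn] at hfst
  push Not at hfst
  obtain ⟨⟨g, i⟩, hi, ⟨g', j⟩, hj, hgg : g = g', hne⟩ := hfst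
  subst hgg
  have hboth : ∀ k, T g k ⊆ s.biUnion fun q => T q.1 q.2 := fun k => by
    obtain rfl | rfl : k = i ∨ k = j := by simp only [ne_eq, Prod.mk.injEq, true_and] at hne; omega
    exacts [subset_biUnion_of_mem (fun q => T q.1 q.2) hi,
      subset_biUnion_of_mem (fun q => T q.1 q.2) hj]
  calc #s ≤ Fintype.card (ι × Fin 2) := card_le_univ s
    _ = Fintype.card ι + Fintype.card ι := by simp [Fintype.card_prod, mul_two]
    _ ≤ #(T g 0) + #(T g 1) := add_le_add (hT g 0) (hT g 1)
    _ = #(T g 0 ∪ T g 1) := (card_union_of_disjoint (hdisj g)).symm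
    _ ≤ #(s.biUnion fun q => T q.1 q.2) := card_le_card (union_subset (hboth 0) (hboth 1))

theorem exists_factorsThrough_fst_mem (T : ι → Fin 2 → Finset α)
    (hT : ∀ g i, Fintype.card ι ≤ #(T g i)) :
    ∃ f : ι × Fin 2 → α, (∀ p, f p ∈ T p.1 p.2) ∧ FactorsThrough Prod.fst f := by
  classical
  induction hcard : Fintype.card ι using Nat.strong_induction_on generalizing ι with
  | _ N ih =>
    by_cases hshared : ∃ g x, ∀ i, x ∈ T g i
    swap
    · obtain ⟨f, hinj, hf⟩ := exists_injective_mem_of_disjoint T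
        (fun g => disjoint_left.2 fun x h0 h1 => hshared ⟨g, x, Fin.forall_fin_two.2 ⟨h0, h1⟩⟩) hT
      exact ⟨f, hf, fun p q hpq => congrArg Prod.fst (hinj hpq)⟩
    obtain ⟨g, x, hx⟩ := hshared
    have hcard' : Fintype.card {g' // g' ≠ g} = N - 1 := by
      rw [Fintype.card_subtype_compl, Fintype.card_subtype_eq, hcard]
    have hN : 0 < N := hcard ▸ Fintype.card_pos_iff.2 ⟨g⟩
    obtain ⟨f', hf'T, hf'⟩ := ih (N - 1) (by omega) (fun g' i => (T g'.1 i).erase x)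
      (fun g' i => hcard' ▸ hcard ▸
        (Nat.sub_le_sub_right (hT g' i) 1).trans pred_card_le_card_erase) hcard'
    refine ⟨fun p => if h : p.1 = g then x else f' (⟨p.1, h⟩, p.2), fun ⟨g', i⟩ => ?_, ?_⟩
    · dsimp only
      split_ifs with h
      · exact h ▸ hx i
      · exact mem_of_mem_erase (hf'T _)
    · rintro ⟨g₁, i₁⟩ ⟨g₂, i₂⟩ h
      dsimp only at h ⊢
      split_ifs at h with h₁ h₂ h₂
      · rw [h₁, h₂]
      · exact absurd h.symm (ne_of_mem_erase (hf'T _))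
      · exact absurd h (ne_of_mem_erase (hf'T _))
      · exact congrArg Subtype.val (hf' h)

end Couples

theorem stmt_8_general (n : ℕ) (u : Fin n → Fin 2 → Fin (2 * n) → ℝ)
    (hnn : ∀ g i a, 0 ≤ u g i a) :
    ∃ π : Fin (2 * n) → Fin n, ∀ (g : Fin n) (i : Fin 2),
      ∃ C : Finset (Fin (2 * n)),
        Disjoint C (Finset.univ.filter (fun a => π a = g)) ∧ C.card ≤ 1 ∧
        (∑ a, u g i a) / n ≤
          ∑ a ∈ Finset.univ.filter (fun a => π a = g) ∪ C, u g i a := by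
  obtain ⟨f, hf, hfst⟩ := exists_factorsThrough_fst_mem (fun g i => topGoods (u g i) n)
    fun g i => by simpa using le_card_topGoods (u g i) (k := n) (by simp; omega)
  -- goods given to no agent are allocated arbitrarily
  refine ⟨extend f Prod.fst Fin.modNat, fun g i => ?_⟩
  have hπ : extend f Prod.fst Fin.modNat (f (g, i)) = g := hfst.extend_apply _ (g, i)
  exact isProp1_of_mem_topGoods (u g i) (hnn g i) (by simp) (mem_filter.2 ⟨mem_univ _, hπ⟩)
    (hf (g, i))

/-- For `n` couples and `m = 2n` goods, a PROP1 allocation always exists. -/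
theorem stmt_8 (n : ℕ) (hn : 0 < n) (u : Fin n → Fin 2 → Fin (2 * n) → ℝ)
    (hnn : ∀ g i a, 0 ≤ u g i a) :
    ∃ π : Fin (2 * n) → Fin n, ∀ (g : Fin n) (i : Fin 2),
      ∃ C : Finset (Fin (2 * n)),
        Disjoint C (Finset.univ.filter (fun a => π a = g)) ∧ C.card ≤ 1 ∧
        (∑ a, u g i a) / n ≤
          ∑ a ∈ Finset.univ.filter (fun a => π a = g) ∪ C, u g i a :=
  stmt_8_general n u hnn
end

section
/- Hall's condition step in the m=2n PROP1 proof: Let G be a bipartite graph between remaining goods M' (|M'| = 2n - k) and remaining agents N' (|N'| = 2n - 2k, paired into n - k groups of two), where each agent has degree at least n - k, and no two agents in the same group share a neighbor. Then every subset A ⊆ N' satisfies |N_G(A)| ≥ |A|, so G has a matching saturating N'. -/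
/-- Hall's condition step in the `m = 2n` PROP1 proof: with `2(n-k)` remaining agents
paired into couples with disjoint neighborhoods, each of degree at least `n - k`, every
subset of agents satisfies Hall's condition and hence a matching saturating the agents
exists. -/
theorem stmt_9 {Goods Agents : Type*} [Fintype Goods] [Fintype Agents]
    [DecidableEq Goods] [DecidableEq Agents]
    (n k : ℕ) (hk : k ≤ n)
    (hM : Fintype.card Goods = 2 * n - k)
    (hN : Fintype.card Agents = 2 * (n - k))
    (nbr : Agents → Finset Goods)
    (pair : Agents → Agents)
    (hinv : Function.Involutive pair)
    (hne : ∀ a, pair a ≠ a)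
    (hdeg : ∀ a, n - k ≤ (nbr a).card)
    (hdisj : ∀ a, Disjoint (nbr a) (nbr (pair a))) :
    (∀ A : Finset Agents, A.card ≤ (A.biUnion nbr).card) ∧
    ∃ f : Agents → Goods, Function.Injective f ∧ ∀ a, f a ∈ nbr a := by
  have hall : ∀ A : Finset Agents, A.card ≤ (A.biUnion nbr).card := by
    intro A
    rcases A.eq_empty_or_nonempty with rfl | ⟨a0, ha0⟩
    · simp
    by_cases hp : ∃ a ∈ A, pair a ∈ A
    · obtain ⟨a, ha, hpa⟩ := hp
      have hsub : nbr a ∪ nbr (pair a) ⊆ A.biUnion nbr := by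
        apply Finset.union_subset
        · exact Finset.subset_biUnion_of_mem nbr ha
        · exact Finset.subset_biUnion_of_mem nbr hpa
      have h1 : 2 * (n - k) ≤ (nbr a ∪ nbr (pair a)).card := by
        rw [Finset.card_union_of_disjoint (hdisj a), two_mul]
        exact Nat.add_le_add (hdeg a) (hdeg (pair a))
      calc A.card ≤ Fintype.card Agents := A.card_le_univ
        _ = 2 * (n - k) := hN
        _ ≤ (nbr a ∪ nbr (pair a)).card := h1
        _ ≤ _ := Finset.card_le_card hsub
    · push_neg at hp
      have hdisjA : Disjoint A (A.image pair) := by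
        rw [Finset.disjoint_right]
        intro x hx hxA
        obtain ⟨a, ha, rfl⟩ := Finset.mem_image.mp hx
        exact hp a ha hxA
      have hcard : A.card + A.card ≤ Fintype.card Agents := by
        have := Finset.card_le_univ (A ∪ A.image pair)
        rw [Finset.card_union_of_disjoint hdisjA,
          Finset.card_image_of_injective A hinv.injective] at this
        simpa using this
      have hA : A.card ≤ n - k := by omega
      calc A.card ≤ n - k := hA
        _ ≤ (nbr a0).card := hdeg a0
        _ ≤ _ := Finset.card_le_card (Finset.subset_biUnion_of_mem nbr ha0)
  exact ⟨hall, (Finset.all_card_le_biUnion_card_iff_exists_injective nbr).mp hall⟩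
end

section
/- Consider the polytope over variables x_{αg} for edges (α,g) ∈ E ⊆ M' × G' defined by: agent constraints Σ_{α:(α,g)∈E} x_{αg} u_{gi}(α) ≥ c_{gi} for each group g in G' and agent i in g; good constraints Σ_{g:(α,g)∈E} x_{αg} = 1 for each α ∈ M'; and 0 ≤ x_{αg} ≤ 1. If M' is nonempty, then every basic feasible solution x* satisfies at least one of: (i) x*_{αg} ∈ {0,1} for some edge (α,g) ∈ E, or (ii) Σ_{α:(α,g)∈E} x*_{αg} ≤ |g| for some nonempty group g ∈ G'. -/
open Finset Filter Topology

/-! If no coordinate of the extreme point `x` on `E` is `0` or `1`, every good is split over at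
least two edges, so `2 |Goods| ≤ |E|`; if moreover every nonempty group receives more weight
than its size, summing the group weights (which total `|Goods|`) gives `∑ size < |Goods|`.
So `E` has more coordinates than there are good and agent constraints, and some nonzero
direction supported on `E` leaves every constraint sum unchanged. As all coordinates on `E`
lie strictly inside `(0, 1)`, `x` can be moved both ways along it inside the polytope,
contradicting extremality. -/

theorem eq_zero_of_mem_extremePoints_of_eventually_add_smul_mem {V : Type*} [AddCommGroup V]
    [Module ℝ V] {P : Set V} {x d : V} (hx : x ∈ P.extremePoints ℝ)
    (h : ∀ᶠ t in 𝓝 (0 : ℝ), x + t • d ∈ P) : d = 0 := by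
  obtain ⟨ε, hε, hball⟩ := Metric.eventually_nhds_iff.mp h
  have hplus : x + (ε / 2) • d ∈ P :=
    hball (by rw [Real.dist_0_eq_abs, abs_of_pos (by positivity)]; linarith)
  have hminus : x + (-(ε / 2)) • d ∈ P :=
    hball (by rw [Real.dist_0_eq_abs, abs_neg, abs_of_pos (by positivity)]; linarith)
  have hmid : x ∈ openSegment ℝ (x + (ε / 2) • d) (x + (-(ε / 2)) • d) :=
    ⟨1 / 2, 1 / 2, by norm_num, by norm_num, by norm_num, by module⟩
  have hfix : x + (ε / 2) • d = x := hx.2 hplus hminus hmid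
  exact (smul_eq_zero.mp (add_eq_left.mp hfix)).resolve_left (by positivity)

theorem one_lt_card_of_sum_eq_one_of_lt_one {ι : Type*} {s : Finset ι} {w : ι → ℝ}
    (hsum : ∑ i ∈ s, w i = 1) (hlt : ∀ i ∈ s, w i < 1) : 1 < #s := by
  by_contra! hcard
  obtain rfl | ⟨a, ha⟩ := s.eq_empty_or_nonempty
  · simp at hsum
  · have hs : s = {a} := eq_singleton_iff_unique_mem.mpr
      ⟨ha, fun b hb => card_le_one.mp hcard b hb a ha⟩
    rw [hs, sum_singleton] at hsum
    exact (hlt a ha).ne hsum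

theorem sum_natCast_lt_sum_of_forall_pos_lt {ι : Type*} [Fintype ι] {s : ι → ℕ} {w : ι → ℝ}
    (hw : ∀ i, 0 ≤ w i) (h : ∀ i, 0 < s i → (s i : ℝ) < w i) (hpos : 0 < ∑ i, w i) :
    ∑ i, (s i : ℝ) < ∑ i, w i := by
  by_cases hs : ∃ i, 0 < s i
  · obtain ⟨i, hi⟩ := hs
    refine sum_lt_sum (fun j _ => ?_) ⟨i, mem_univ i, h i hi⟩
    rcases (s j).eq_zero_or_pos with hj | hj
    · simpa [hj] using hw j
    · exact (h j hj).le
  · push Not at hs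
    simpa [fun i => Nat.le_zero.mp (hs i)] using hpos

section Allocation

variable {Goods Groups : Type*} [Fintype Goods] [Fintype Groups] [DecidableEq Goods]
  [DecidableEq Groups] (size : Groups → ℕ) (E : Finset (Goods × Groups))
  (u : (g : Groups) → Fin (size g) → Goods → ℝ)

def allocationPolytope (c : (g : Groups) → Fin (size g) → ℝ) : Set (Goods × Groups → ℝ) :=
  {x | (∀ p, p ∉ E → x p = 0) ∧
    (∀ p ∈ E, 0 ≤ x p ∧ x p ≤ 1) ∧
    (∀ α : Goods, ∑ g ∈ univ.filter (fun g => (α, g) ∈ E), x (α, g) = 1) ∧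
    (∀ (g : Groups) (i : Fin (size g)),
      c g i ≤ ∑ α ∈ univ.filter (fun α => (α, g) ∈ E), x (α, g) * u g i α)}

noncomputable def constraintMap :
    (Goods × Groups → ℝ) →ₗ[ℝ] (Goods ⊕ (Σ g : Groups, Fin (size g)) → ℝ) where
  toFun z := Sum.elim
    (fun α => ∑ g ∈ univ.filter (fun g => (α, g) ∈ E), z (α, g))
    (fun gi => ∑ α ∈ univ.filter (fun α => (α, gi.1) ∈ E), z (α, gi.1) * u gi.1 gi.2 α)
  map_add' y z := by
    ext (α | ⟨g, i⟩) <;> simp [sum_add_distrib, add_mul]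
  map_smul' t y := by
    ext (α | ⟨g, i⟩) <;> simp [mul_sum, mul_assoc]

theorem exists_ne_zero_mem_ker_constraintMap
    (h : Fintype.card Goods + ∑ g, size g < #E) :
    ∃ d, d ≠ 0 ∧ (∀ p ∉ E, d p = 0) ∧ constraintMap size E u d = 0 := by
  let extendByZero := Function.ExtendByZero.linearMap ℝ ((↑) : E → Goods × Groups)
  have hdim : Module.finrank ℝ (Goods ⊕ (Σ g : Groups, Fin (size g)) → ℝ) <
      Module.finrank ℝ (E → ℝ) := by
    simpa [Fintype.card_sigma] using h
  obtain ⟨y, hy, hy0⟩ := (Submodule.ne_bot_iff _).mp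
    (LinearMap.ker_ne_bot_of_finrank_lt (f := constraintMap size E u ∘ₗ extendByZero) hdim)
  obtain ⟨q, hq⟩ := Function.ne_iff.mp hy0
  refine ⟨extendByZero y, fun h0 => hq ?_, fun p hp => ?_, hy⟩
  · simpa [extendByZero, Subtype.val_injective.extend_apply] using congrFun h0 q
  · exact Function.extend_apply' _ _ _ (by simpa using hp)

variable {size E u}

theorem two_mul_card_le_card_of_mem_allocationPolytope {c : (g : Groups) → Fin (size g) → ℝ}
    {x : Goods × Groups → ℝ} (hx : x ∈ allocationPolytope size E u c)
    (hfrac : ∀ p ∈ E, x p ∈ Set.Ioo 0 1) :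
    2 * Fintype.card Goods ≤ #E := by
  have hE : #E = ∑ α : Goods, #(univ.filter (fun g => (α, g) ∈ E)) := by
    simp only [card_eq_sum_ones]
    exact sum_finset_product E univ _ (by simp)
  rw [hE, Fintype.card_eq_sum_ones, mul_sum]
  refine sum_le_sum fun α _ => one_lt_card_of_sum_eq_one_of_lt_one (hx.2.2.1 α) fun g hg => ?_
  exact (hfrac _ (by simpa using hg)).2

theorem sum_size_lt_card_of_mem_allocationPolytope [Nonempty Goods]
    {c : (g : Groups) → Fin (size g) → ℝ} {x : Goods × Groups → ℝ}
    (hx : x ∈ allocationPolytope size E u c)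
    (hheavy : ∀ g, 0 < size g →
      (size g : ℝ) < ∑ α ∈ univ.filter (fun α => (α, g) ∈ E), x (α, g)) :
    ∑ g, size g < Fintype.card Goods := by
  obtain ⟨-, hbound, hgoods, -⟩ := hx
  have htotal : ∑ g : Groups, ∑ α ∈ univ.filter (fun α => (α, g) ∈ E), x (α, g) =
      Fintype.card Goods := by
    rw [← sum_finset_product_right E univ (fun g => univ.filter fun α => (α, g) ∈ E) (by simp),
      sum_finset_product E univ (fun α => univ.filter fun g => (α, g) ∈ E) (by simp)]
    simp [hgoods]
  have hlt := sum_natCast_lt_sum_of_forall_pos_lt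
    (fun g => sum_nonneg fun α hα => (hbound _ (by simpa using hα)).1) hheavy
    (htotal ▸ Nat.cast_pos.mpr Fintype.card_pos)
  exact_mod_cast htotal ▸ hlt

theorem eventually_add_smul_mem_allocationPolytope {c : (g : Groups) → Fin (size g) → ℝ}
    {x d : Goods × Groups → ℝ} (hx : x ∈ allocationPolytope size E u c)
    (hfrac : ∀ p ∈ E, x p ∈ Set.Ioo 0 1) (hdE : ∀ p ∉ E, d p = 0)
    (hd : constraintMap size E u d = 0) :
    ∀ᶠ t in 𝓝 (0 : ℝ), x + t • d ∈ allocationPolytope size E u c := by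
  obtain ⟨hx0, -, hgoods, hagents⟩ := hx
  have hbounds : ∀ᶠ t in 𝓝 (0 : ℝ), ∀ p ∈ E, x p + t * d p ∈ Set.Ioo 0 1 := by
    rw [eventually_all_finset]
    intro p hp
    have hcont : Continuous fun t : ℝ => x p + t * d p := by fun_prop
    exact hcont.tendsto' 0 (x p) (by simp) (Ioo_mem_nhds (hfrac p hp).1 (hfrac p hp).2)
  filter_upwards [hbounds] with t ht
  have hlin : constraintMap size E u (x + t • d) = constraintMap size E u x := by simp [hd]
  refine ⟨fun p hp => by simp [hx0 p hp, hdE p hp],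
    fun p hp => ⟨(ht p hp).1.le, (ht p hp).2.le⟩, fun α => ?_, fun g i => ?_⟩
  · exact (congrFun hlin (.inl α)).trans (hgoods α)
  · exact (hagents g i).trans_eq (congrFun hlin (.inr ⟨g, i⟩)).symm

end Allocation

theorem stmt_10_general {Goods Groups : Type*} [Fintype Goods] [Fintype Groups]
    [DecidableEq Goods] [DecidableEq Groups] [Nonempty Goods]
    (size : Groups → ℕ)
    (E : Finset (Goods × Groups))
    (u : (g : Groups) → Fin (size g) → Goods → ℝ)
    (c : (g : Groups) → Fin (size g) → ℝ)
    (P : Set (Goods × Groups → ℝ))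
    (hP : P = {x | (∀ p, p ∉ E → x p = 0) ∧
      (∀ p ∈ E, 0 ≤ x p ∧ x p ≤ 1) ∧
      (∀ α : Goods, ∑ g ∈ Finset.univ.filter (fun g => (α, g) ∈ E), x (α, g) = 1) ∧
      (∀ (g : Groups) (i : Fin (size g)),
        c g i ≤ ∑ α ∈ Finset.univ.filter (fun α => (α, g) ∈ E), x (α, g) * u g i α)})
    (x : Goods × Groups → ℝ) (hx : x ∈ Set.extremePoints ℝ P) :
    (∃ p ∈ E, x p = 0 ∨ x p = 1) ∨
    (∃ g : Groups, 0 < size g ∧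
      ∑ α ∈ Finset.univ.filter (fun α => (α, g) ∈ E), x (α, g) ≤ (size g : ℝ)) := by
  change P = allocationPolytope size E u c at hP
  subst hP
  by_contra! hcon
  obtain ⟨hnotint, hheavy⟩ := hcon
  have hxP := hx.1
  have hfrac : ∀ p ∈ E, x p ∈ Set.Ioo 0 1 := fun p hp =>
    ⟨(hxP.2.1 p hp).1.lt_of_ne' (hnotint p hp).1, (hxP.2.1 p hp).2.lt_of_ne (hnotint p hp).2⟩
  have hcount : Fintype.card Goods + ∑ g, size g < #E := by
    have hedges := two_mul_card_le_card_of_mem_allocationPolytope hxP hfrac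
    have hsizes := sum_size_lt_card_of_mem_allocationPolytope hxP hheavy
    omega
  obtain ⟨d, hd0, hdE, hd⟩ := exists_ne_zero_mem_ker_constraintMap size E u hcount
  exact hd0 (eq_zero_of_mem_extremePoints_of_eventually_add_smul_mem hx
    (eventually_add_smul_mem_allocationPolytope hxP hfrac hdE hd))

/-- BFS lemma: if the set of goods is nonempty, every basic feasible solution (extreme
point) of the polytope with agent constraints, good constraints and edge bounds has an
integral coordinate on some edge, or some nonempty group has incident weight at most its
size. -/
theorem stmt_10 {Goods Groups : Type*} [Fintype Goods] [Fintype Groups]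
    [DecidableEq Goods] [DecidableEq Groups] [Nonempty Goods]
    (size : Groups → ℕ)
    (E : Finset (Goods × Groups))
    (u : (g : Groups) → Fin (size g) → Goods → ℝ)
    (hu : ∀ g i a, 0 ≤ u g i a)
    (c : (g : Groups) → Fin (size g) → ℝ)
    (P : Set (Goods × Groups → ℝ))
    (hP : P = {x | (∀ p, p ∉ E → x p = 0) ∧
      (∀ p ∈ E, 0 ≤ x p ∧ x p ≤ 1) ∧
      (∀ α : Goods, ∑ g ∈ Finset.univ.filter (fun g => (α, g) ∈ E), x (α, g) = 1) ∧
      (∀ (g : Groups) (i : Fin (size g)),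
        c g i ≤ ∑ α ∈ Finset.univ.filter (fun α => (α, g) ∈ E), x (α, g) * u g i α)})
    (x : Goods × Groups → ℝ) (hx : x ∈ Set.extremePoints ℝ P) :
    (∃ p ∈ E, x p = 0 ∨ x p = 1) ∨
    (∃ g : Groups, 0 < size g ∧
      ∑ α ∈ Finset.univ.filter (fun α => (α, g) ∈ E), x (α, g) ≤ (size g : ℝ)) :=
  stmt_10_general size E u c P hP x hx
end

section
/- In the iterative rounding argument: if at some iteration a basic feasible solution x* satisfies the agent constraint u_{gi}(B_g) + Σ_{α:(α,g)∈E} x*_{αg} u_{gi}(α) ≥ u_{gi}(M)/n and also Σ_{α:(α,g)∈E} x*_{αg} ≤ i, then there exists a set B of at most i goods disjoint from B_g such that u_{gi}(B_g ∪ B) ≥ u_{gi}(M)/n; i.e., agent (g,i) is PROP-i with respect to bundle B_g. -/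
/-- Fractional knapsack bound: a `[0,1]`-weighted sum with total weight at most `i`
is at most the sum of some `i` elements. -/
theorem knap_aux {G : Type*} [DecidableEq G] (u : G → ℝ) (hu : ∀ a, 0 ≤ u a) :
    ∀ (i : ℕ) (E : Finset G) (x : G → ℝ), (∀ α ∈ E, 0 ≤ x α ∧ x α ≤ 1) →
    (∑ α ∈ E, x α ≤ (i : ℝ)) →
    ∃ B ⊆ E, B.card ≤ i ∧ ∑ α ∈ E, x α * u α ≤ ∑ a ∈ B, u a := by
  intro i
  induction i with
  | zero =>
    intro E x hx hxi
    refine ⟨∅, Finset.empty_subset _, le_refl _, ?_⟩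
    simp only [Finset.sum_empty]
    have hzero : ∀ α ∈ E, x α = 0 := by
      have h := (Finset.sum_eq_zero_iff_of_nonneg (fun α hα => (hx α hα).1)).mp
        (le_antisymm (by exact_mod_cast hxi) (Finset.sum_nonneg (fun α hα => (hx α hα).1)))
      exact h
    apply le_of_eq
    apply Finset.sum_eq_zero
    intro α hα
    rw [hzero α hα, zero_mul]
  | succ i ih =>
    intro E x hx hxi
    by_cases hcase : ∑ α ∈ E, x α ≤ (i : ℝ)
    · obtain ⟨B, hBE, hBcard, hBle⟩ := ih E x hx hcase
      exact ⟨B, hBE, hBcard.trans (Nat.le_succ i), hBle⟩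
    push_neg at hcase
    have hEne : E.Nonempty := by
      by_contra h
      rw [Finset.not_nonempty_iff_eq_empty] at h
      simp [h] at hcase
      exact absurd hcase (not_lt.mpr (by positivity))
    obtain ⟨m, hmE, hmax⟩ := Finset.exists_max_image E u hEne
    set E' := E.erase m with hE'
    have hsplit : ∑ α ∈ E, x α = x m + ∑ α ∈ E', x α := (Finset.add_sum_erase E x hmE).symm
    have hsplitu : ∑ α ∈ E, x α * u α = x m * u m + ∑ α ∈ E', x α * u α :=
      (Finset.add_sum_erase E (fun α => x α * u α) hmE).symm
    have hx' : ∀ α ∈ E', 0 ≤ x α ∧ x α ≤ 1 := fun α hα => hx α (Finset.mem_of_mem_erase hα)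
    set S : ℝ := ∑ α ∈ E', x α with hS
    have hSnn : 0 ≤ S := Finset.sum_nonneg (fun α hα => (hx' α hα).1)
    have hxm01 := hx m hmE
    have hsum_le : x m + S ≤ (i : ℝ) + 1 := by
      rw [← hsplit]; push_cast at hxi ⊢; linarith
    have hubound : ∑ α ∈ E', x α * u α ≤ S * u m := by
      rw [hS, Finset.sum_mul]
      apply Finset.sum_le_sum
      intro α hα
      exact mul_le_mul_of_nonneg_left (hmax α (Finset.mem_of_mem_erase hα)) (hx' α hα).1
    by_cases hScase : S ≤ (i : ℝ)
    · -- no scaling needed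
      obtain ⟨B', hB'E, hB'card, hB'le⟩ := ih E' x hx' hScase
      refine ⟨insert m B', ?_, ?_, ?_⟩
      · intro a ha
        rcases Finset.mem_insert.mp ha with h | h
        · exact h ▸ hmE
        · exact Finset.mem_of_mem_erase (hB'E h)
      · have : m ∉ B' := fun h => (Finset.mem_erase.mp (hB'E h)).1 rfl
        rw [Finset.card_insert_of_notMem this]
        omega
      · have : m ∉ B' := fun h => (Finset.mem_erase.mp (hB'E h)).1 rfl
        rw [Finset.sum_insert this, hsplitu]
        have h1 : x m * u m ≤ u m :=
          mul_le_of_le_one_left (hu m) hxm01.2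
        linarith
    push_neg at hScase
    have hSpos : 0 < S := lt_of_le_of_lt (by positivity) hScase
    set c : ℝ := (i : ℝ) / S with hc
    have hc0 : 0 ≤ c := div_nonneg (by positivity) hSnn
    have hc1 : c ≤ 1 := by
      rw [hc, div_le_one hSpos]; exact le_of_lt hScase
    have hx'' : ∀ α ∈ E', 0 ≤ c * x α ∧ c * x α ≤ 1 := by
      intro α hα
      constructor
      · exact mul_nonneg hc0 (hx' α hα).1
      · calc c * x α ≤ 1 * x α := mul_le_mul_of_nonneg_right hc1 (hx' α hα).1
          _ = x α := one_mul _
          _ ≤ 1 := (hx' α hα).2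
    have hsum'' : ∑ α ∈ E', c * x α ≤ (i : ℝ) := by
      rw [← Finset.mul_sum, ← hS, hc, div_mul_cancel₀ _ (ne_of_gt hSpos)]
    obtain ⟨B', hB'E, hB'card, hB'le⟩ := ih E' (fun α => c * x α) hx'' hsum''
    have hmB' : m ∉ B' := fun h => (Finset.mem_erase.mp (hB'E h)).1 rfl
    refine ⟨insert m B', ?_, ?_, ?_⟩
    · intro a ha
      rcases Finset.mem_insert.mp ha with h | h
      · exact h ▸ hmE
      · exact Finset.mem_of_mem_erase (hB'E h)
    · rw [Finset.card_insert_of_notMem hmB']; omega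
    · rw [Finset.sum_insert hmB', hsplitu]
      have key : ∑ α ∈ E', x α * u α - ∑ α ∈ E', c * x α * u α ≤ (1 - c) * (S * u m) := by
        have : ∑ α ∈ E', x α * u α - ∑ α ∈ E', c * x α * u α
            = (1 - c) * ∑ α ∈ E', x α * u α := by
          rw [← Finset.sum_sub_distrib, Finset.mul_sum]
          congr 1; funext α; ring
        rw [this]
        exact mul_le_mul_of_nonneg_left hubound (by linarith)
      have hB'le' : ∑ α ∈ E', c * x α * u α ≤ ∑ a ∈ B', u a := by
        convert hB'le using 2
      have hcS : (1 - c) * S = S - (i : ℝ) := by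
        rw [hc]; field_simp
      have h1 : x m * u m ≤ u m := mul_le_of_le_one_left (hu m) hxm01.2
      have hum : 0 ≤ u m := hu m
      have key2 : ∑ α ∈ E', x α * u α - ∑ α ∈ E', c * x α * u α ≤ (S - ↑i) * u m := by
        calc ∑ α ∈ E', x α * u α - ∑ α ∈ E', c * x α * u α ≤ (1 - c) * (S * u m) := key
          _ = ((1 - c) * S) * u m := by ring
          _ = (S - ↑i) * u m := by rw [hcS]
      have hexp : (x m + S - ↑i) * u m = x m * u m + (S - ↑i) * u m := by ring
      have hfinal : x m * u m + ∑ α ∈ E', x α * u α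
          ≤ ∑ a ∈ B', u a + (x m + S - i) * u m := by
        rw [hexp]; linarith
      have : (x m + S - i) * u m ≤ u m := by
        nlinarith
      linarith

/-- PROP-i step of the iterative rounding: if the agent constraint holds fractionally and
the total incident weight is at most `i`, then there is a set of at most `i` goods disjoint
from the current bundle whose addition reaches the proportional share. -/
theorem stmt_12 {Goods : Type*} [Fintype Goods] [DecidableEq Goods]
    (n : ℕ) (hn : 0 < n) (i : ℕ) (hi : 0 < i)
    (u : Goods → ℝ) (hu : ∀ a, 0 ≤ u a)
    (Bg Eg : Finset Goods) (hdisj : Disjoint Eg Bg)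
    (x : Goods → ℝ) (hx : ∀ α ∈ Eg, 0 ≤ x α ∧ x α ≤ 1)
    (hxi : ∑ α ∈ Eg, x α ≤ (i : ℝ))
    (hagent : (∑ a, u a) / n ≤ ∑ a ∈ Bg, u a + ∑ α ∈ Eg, x α * u α) :
    ∃ B : Finset Goods, Disjoint B Bg ∧ B.card ≤ i ∧
      (∑ a, u a) / n ≤ ∑ a ∈ Bg ∪ B, u a := by
  obtain ⟨B, hBE, hBcard, hBle⟩ := knap_aux u hu i Eg x hx hxi
  refine ⟨B, (hdisj.mono_left hBE), hBcard, ?_⟩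
  rw [Finset.sum_union (Finset.disjoint_left.mpr
    (fun a haB hab => Finset.disjoint_left.mp (hdisj.mono_left hBE) haB hab)).symm]
  · linarith
end

section
/- A point p in a polyhedron P = {x ∈ ℝ^n : Ax ≤ b} is Pareto optimal (no y ∈ P with y ≥ p coordinatewise and y ≠ p) if and only if there exists a strictly positive weight vector w > 0 such that p maximizes wᵀx over P. -/
/-!
A Pareto optimal point `p` of `P = {x | A x ≤ b}` is a maximal element of `P` for the
componentwise order. The directions `d` satisfying the constraints active at `p` form a closed
convex cone `C`, and every `x - p` with `x ∈ P` lies in `C`. Since the inactive constraints have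
slack, `p + ε d ∈ P` for small `ε > 0` and every `d ∈ C`; so by maximality `C` misses the standard
simplex. Separating the compact simplex from `C` by a hyperplane yields a functional that is
negative on every basis vector and nonnegative on `C`; its negative is the weight vector `w`.
Conversely, a point dominating `p` would strictly increase `wᵀx`.
-/

open Matrix Filter Topology

variable {ι κ : Type*} [Fintype κ]

lemma dotProduct_lt_dotProduct_of_pos_left {w u v : κ → ℝ} (hw : ∀ j, 0 < w j) (huv : u ≤ v)
    (hne : u ≠ v) : w ⬝ᵥ u < w ⬝ᵥ v := by
  obtain ⟨j, hj⟩ : ∃ j, u j < v j := by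
    by_contra! h
    exact hne (le_antisymm huv h)
  exact Finset.sum_lt_sum (fun k _ => mul_le_mul_of_nonneg_left (huv k) (hw k).le)
    ⟨j, Finset.mem_univ j, mul_lt_mul_of_pos_left hj (hw j)⟩

lemma maximal_of_forall_dotProduct_le {P : (κ → ℝ) → Prop} {w p : κ → ℝ} (hp : P p)
    (hw : ∀ j, 0 < w j) (hmax : ∀ x, P x → w ⬝ᵥ x ≤ w ⬝ᵥ p) : Maximal P p := by
  refine ⟨hp, fun y hy hpy => le_of_eq ?_⟩
  by_contra hne
  exact (hmax y hy).not_gt (dotProduct_lt_dotProduct_of_pos_left hw hpy (Ne.symm hne))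

namespace Matrix

/-- Encoded as the dual cone of the negated rows of the constraints active at `p`. -/
def feasibleDirections (A : Matrix ι κ ℝ) (b : ι → ℝ) (p : κ → ℝ) : ProperCone ℝ (κ → ℝ) where
  toSubmodule := PointedCone.dual (dotProductBilin ℝ ℝ) ((fun i => -A i) '' {i | (A *ᵥ p) i = b i})
  isClosed' := PointedCone.isClosed_dual fun _ => LinearMap.continuous_of_finiteDimensional _

variable {A : Matrix ι κ ℝ} {b : ι → ℝ} {p d x : κ → ℝ}

lemma mem_feasibleDirections :
    d ∈ feasibleDirections A b p ↔ ∀ i, (A *ᵥ p) i = b i → (A *ᵥ d) i ≤ 0 := by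
  simp [feasibleDirections, PointedCone.mem_dual, mulVec]

lemma sub_mem_feasibleDirections (hx : A *ᵥ x ≤ b) : x - p ∈ feasibleDirections A b p := by
  refine mem_feasibleDirections.2 fun i hi => ?_
  rw [mulVec_sub, Pi.sub_apply, hi, sub_nonpos]
  exact hx i

lemma exists_pos_add_smul_le [Finite ι] (hp : A *ᵥ p ≤ b) (hd : d ∈ feasibleDirections A b p) :
    ∃ ε > (0 : ℝ), A *ᵥ (p + ε • d) ≤ b := by
  have hline : ∀ ε : ℝ, A *ᵥ (p + ε • d) = A *ᵥ p + ε • A *ᵥ d := fun ε => by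
    rw [mulVec_add, mulVec_smul]
  have : ∀ᶠ ε in 𝓝[>] (0 : ℝ), ∀ i, (A *ᵥ (p + ε • d)) i ≤ b i := by
    refine eventually_all.2 fun i => ?_
    simp only [hline, Pi.add_apply, Pi.smul_apply, smul_eq_mul]
    rcases (hp i).eq_or_lt with hactive | hslack
    · filter_upwards [self_mem_nhdsWithin] with ε hε
      have := mul_nonpos_of_nonneg_of_nonpos (le_of_lt hε) (mem_feasibleDirections.1 hd i hactive)
      linarith
    · have hcont : Tendsto (fun ε : ℝ => (A *ᵥ p) i + ε * (A *ᵥ d) i) (𝓝[>] 0)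
          (𝓝 ((A *ᵥ p) i)) := tendsto_nhdsWithin_of_tendsto_nhds
        ((continuous_const.add (continuous_id.mul continuous_const)).tendsto' 0 _ (by simp))
      exact (hcont.eventually_lt_const hslack).mono fun _ h => h.le
  obtain ⟨ε, hfeas, hε⟩ := (this.and (self_mem_nhdsWithin (s := Set.Ioi 0) (a := 0))).exists
  exact ⟨ε, hε, hfeas⟩

lemma disjoint_stdSimplex_feasibleDirections [Finite ι] (hp : Maximal (fun x => A *ᵥ x ≤ b) p) :
    Disjoint (stdSimplex ℝ κ) (feasibleDirections A b p : Set (κ → ℝ)) := by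
  refine Set.disjoint_left.2 fun d ⟨hd_nonneg, hd_sum⟩ hd => ?_
  obtain ⟨ε, hε, hfeas⟩ := exists_pos_add_smul_le hp.prop hd
  have hεd : ε • d = 0 := by
    simpa using (hp.eq_of_le hfeas fun j =>
      le_add_of_nonneg_right (mul_nonneg hε.le (hd_nonneg j))).symm
  have : d = 0 := (smul_eq_zero.1 hεd).resolve_left hε.ne'
  simp [this] at hd_sum

theorem _root_.Maximal.exists_pos_dotProduct_le [Finite ι]
    (hp : Maximal (fun x => A *ᵥ x ≤ b) p) :
    ∃ w : κ → ℝ, (∀ j, 0 < w j) ∧ ∀ x, A *ᵥ x ≤ b → w ⬝ᵥ x ≤ w ⬝ᵥ p := by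
  classical
  obtain ⟨f, hf_cone, hf_simplex⟩ := (feasibleDirections A b p).hyperplane_separation
    (convex_stdSimplex ℝ κ) (isCompact_stdSimplex ℝ κ) (disjoint_stdSimplex_feasibleDirections hp)
  set u := (dotProductEquiv ℝ κ).symm f.toLinearMap
  have hf : ∀ v, f v = u ⬝ᵥ v := fun v =>
    (LinearMap.congr_fun ((dotProductEquiv ℝ κ).apply_symm_apply f.toLinearMap) v).symm
  refine ⟨-u, fun j => ?_, fun x hx => ?_⟩
  · have := hf_simplex _ (single_mem_stdSimplex ℝ j)
    rw [hf, dotProduct_single_one] at this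
    simpa using this
  · have := hf_cone _ (sub_mem_feasibleDirections hx)
    rw [hf, dotProduct_sub, sub_nonneg] at this
    simpa using this

end Matrix

/-- A point of a polyhedron `{x : A x ≤ b}` is Pareto optimal iff it maximizes some
strictly positive weighted sum of coordinates over the polyhedron. -/
theorem stmt_14 {m n : ℕ} (A : Matrix (Fin m) (Fin n) ℝ) (b : Fin m → ℝ)
    (p : Fin n → ℝ) (hp : A.mulVec p ≤ b) :
    (¬ ∃ y : Fin n → ℝ, A.mulVec y ≤ b ∧ p ≤ y ∧ y ≠ p) ↔
    ∃ w : Fin n → ℝ, (∀ j, 0 < w j) ∧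
      ∀ x : Fin n → ℝ, A.mulVec x ≤ b → ∑ j, w j * x j ≤ ∑ j, w j * p j := by
  have hpareto : (¬ ∃ y, A *ᵥ y ≤ b ∧ p ≤ y ∧ y ≠ p) ↔ Maximal (fun x => A *ᵥ x ≤ b) p := by
    simp [maximal_iff, hp, eq_comm]
  rw [hpareto]
  exact ⟨Maximal.exists_pos_dotProduct_le,
    fun ⟨w, hw, hmax⟩ => maximal_of_forall_dotProduct_le hp hw hmax⟩
end

section
/- If a fractional allocation x is fractionally Pareto optimal and x' is another fractional allocation such that x_{αg} = 0 implies x'_{αg} = 0 for all goods α and groups g, then x' is also fractionally Pareto optimal. -/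
/-- A fractional allocation: nonnegative fractions summing to one for each good. -/
def IsFracAlloc {Goods Groups : Type*} [Fintype Groups]
    (x : Goods → Groups → ℝ) : Prop :=
  (∀ α g, 0 ≤ x α g) ∧ ∀ α, ∑ g, x α g = 1

/-- Utility of agent `(g, i)` under fractional allocation `x`. -/
def fracUtil {Goods Groups : Type*} [Fintype Goods] {size : Groups → ℕ}
    (u : (g : Groups) → Fin (size g) → Goods → ℝ)
    (x : Goods → Groups → ℝ) (g : Groups) (i : Fin (size g)) : ℝ :=
  ∑ α, x α g * u g i α

/-- A fractional allocation is fractionally Pareto optimal if no fractional allocation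
weakly improves all agents and strictly improves some agent. -/
def IsFPO {Goods Groups : Type*} [Fintype Goods] [Fintype Groups] {size : Groups → ℕ}
    (u : (g : Groups) → Fin (size g) → Goods → ℝ)
    (x : Goods → Groups → ℝ) : Prop :=
  ¬ ∃ y : Goods → Groups → ℝ, IsFracAlloc y ∧
    (∀ (g : Groups) (i : Fin (size g)), fracUtil u x g i ≤ fracUtil u y g i) ∧
    ∃ (g : Groups) (i : Fin (size g)), fracUtil u x g i < fracUtil u y g i

/-- If `x` is fPO and `x'` is a fractional allocation whose support is contained in the
support of `x`, then `x'` is also fPO. -/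
theorem stmt_15 {Goods Groups : Type*} [Fintype Goods] [Fintype Groups]
    {size : Groups → ℕ}
    (u : (g : Groups) → Fin (size g) → Goods → ℝ)
    (hu : ∀ g i a, 0 ≤ u g i a)
    (x x' : Goods → Groups → ℝ)
    (hx : IsFracAlloc x) (hx' : IsFracAlloc x')
    (hxfpo : IsFPO u x)
    (hsupp : ∀ α g, x α g = 0 → x' α g = 0) :
    IsFPO u x' := by
  rintro ⟨y, hy, hle, g0, i0, hlt⟩
  -- choose ε > 0 small enough
  set f : Goods × Groups → ℝ := fun p =>
    if x p.1 p.2 = 0 then 1 else x p.1 p.2 / (|x' p.1 p.2 - y p.1 p.2| + 1) with hf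
  have hfpos : ∀ p, 0 < f p := by
    intro p
    simp only [hf]
    split_ifs with h
    · norm_num
    · have hxp : 0 < x p.1 p.2 := lt_of_le_of_ne (hx.1 p.1 p.2) (Ne.symm h)
      positivity
  set F : Finset ℝ := insert (1 : ℝ) (Finset.univ.image f) with hF
  have hFne : F.Nonempty := ⟨1, Finset.mem_insert_self _ _⟩
  set ε : ℝ := F.min' hFne with hε
  have hεpos : 0 < ε := by
    have hmem := F.min'_mem hFne
    rcases Finset.mem_insert.1 hmem with h | h
    · rw [← hε] at h; rw [h]; norm_num
    · obtain ⟨p, _, hp⟩ := Finset.mem_image.1 h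
      rw [← hε] at hp; rw [← hp]; exact hfpos p
  have hεle : ∀ p : Goods × Groups, ε ≤ f p := fun p =>
    F.min'_le _ (Finset.mem_insert_of_mem (Finset.mem_image_of_mem f (Finset.mem_univ p)))
  set z : Goods → Groups → ℝ := fun α g => x α g + ε * (y α g - x' α g) with hz
  have hznn : ∀ α g, 0 ≤ z α g := by
    intro α g
    simp only [hz]
    by_cases h : x α g = 0
    · have h' := hsupp α g h
      rw [h, h']
      have := hy.1 α g
      nlinarith
    · have hεf := hεle (α, g)
      simp only [hf, if_neg h] at hεf
      have hxp : 0 < x α g := lt_of_le_of_ne (hx.1 α g) (Ne.symm h)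
      have habs : |x' α g - y α g| + 1 > 0 := by positivity
      have : ε * (|x' α g - y α g| + 1) ≤ x α g := by
        rw [div_eq_mul_inv] at hεf
        calc ε * (|x' α g - y α g| + 1) ≤ x α g * (|x' α g - y α g| + 1)⁻¹ * (|x' α g - y α g| + 1) := by
              apply mul_le_mul_of_nonneg_right hεf (le_of_lt habs)
          _ = x α g := by field_simp
      have h2 : x' α g - y α g ≤ |x' α g - y α g| := le_abs_self _
      nlinarith
  have hzsum : ∀ α, ∑ g, z α g = 1 := by
    intro α
    simp only [hz]
    rw [Finset.sum_add_distrib, ← Finset.mul_sum, Finset.sum_sub_distrib, hy.2, hx'.2, hx.2]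
    ring
  have key : ∀ g i, fracUtil u z g i
      = fracUtil u x g i + ε * (fracUtil u y g i - fracUtil u x' g i) := by
    intro g i
    simp only [fracUtil, hz, Finset.mul_sum, ← Finset.sum_sub_distrib, ← Finset.sum_add_distrib]
    apply Finset.sum_congr rfl
    intros; ring
  apply hxfpo
  refine ⟨z, ⟨hznn, hzsum⟩, ?_, g0, i0, ?_⟩
  · intro g i
    rw [key]
    have := hle g i
    nlinarith
  · rw [key]
    nlinarith
end

section
/- A fractional allocation x is fractionally Pareto optimal if and only if there exists a strictly positive weight vector (w_{gi}) such that for every good α and every group g with x_{αg} > 0, group g maximizes Σ_{i∈[|g|]} w_{gi} u_{gi}(α) over all groups. -/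
/-!
If every good goes only to groups maximising the `w`-weighted utility, then `x` maximises total
weighted utility over all fractional allocations, while a Pareto improvement would raise it
strictly because `w > 0`.

Conversely, moving good `α` from a group `g` with `x α g > 0` to any `g'` is a feasible direction
at `x`, so by fPO no nonnegative combination of these transfers changes utilities by a nonzero
nonnegative vector. Finitely generated cones are closed (conic Carathéodory), so the cone spanned
by the utility changes of the transfers can be separated from the standard simplex; the separating
functional gives strictly positive weights under which no transfer increases weighted utility,
which is exactly the maximality condition.
-/

open Finset Matrix Filter Topology

namespace PointedCone

variable {E : Type*} [AddCommGroup E] [Module ℝ E]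

lemma mem_hull_range_iff {ι : Type*} [Fintype ι] {d : ι → E} {y : E} :
    y ∈ hull ℝ (Set.range d) ↔ ∃ c : ι → ℝ, 0 ≤ c ∧ ∑ i, c i • d i = y := by
  rw [Submodule.mem_span_range_iff_exists_fun]
  constructor
  · rintro ⟨c, rfl⟩
    exact ⟨fun i => c i, fun i => (c i).2, rfl⟩
  · rintro ⟨c, hc, rfl⟩
    exact ⟨fun i => ⟨c i, hc i⟩, rfl⟩

lemma exists_mem_sum_erase_smul_eq {ι : Type*} [DecidableEq ι] {d : ι → E} {s : Finset ι}
    {c : ι → ℝ} (hs : ¬ LinearIndepOn ℝ d s) (hc : ∀ i ∈ s, 0 ≤ c i) :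
    ∃ i ∈ s, ∃ c' : ι → ℝ, (∀ j ∈ s, 0 ≤ c' j) ∧
      ∑ j ∈ s.erase i, c' j • d j = ∑ j ∈ s, c j • d j := by
  obtain ⟨a, ha, i₁, hi₁, ha₁⟩ := not_linearIndepOn_finset_iff.mp hs
  wlog hpos : 0 < a i₁ generalizing a
  · exact this (-a) (by simp [neg_smul, sum_neg_distrib, ha]) (neg_ne_zero.2 ha₁)
      (neg_pos.2 (ha₁.lt_or_gt.resolve_right hpos))
  -- Subtract the largest multiple of the dependence `a` keeping `c` nonnegative on `s`;
  -- it vanishes at the index `i₀` attaining `min (c j / a j)` over `a j > 0`.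
  obtain ⟨i₀, hi₀, hmin⟩ := (s.filter (0 < a ·)).exists_min_image (fun j => c j / a j)
    ⟨i₁, mem_filter.2 ⟨hi₁, hpos⟩⟩
  rw [mem_filter] at hi₀
  set t := c i₀ / a i₀
  have ht : 0 ≤ t := div_nonneg (hc i₀ hi₀.1) hi₀.2.le
  refine ⟨i₀, hi₀.1, fun j => c j - t * a j, fun j hj => ?_, ?_⟩
  · rcases lt_or_ge 0 (a j) with haj | haj
    · have := hmin j (mem_filter.2 ⟨hj, haj⟩)
      rw [le_div_iff₀ haj] at this
      linarith
    · nlinarith [hc j hj]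
  · rw [sum_erase _ (by simp [t, div_mul_cancel₀ _ hi₀.2.ne'])]
    simp only [sub_smul, sum_sub_distrib, mul_smul, ← smul_sum, ha, smul_zero, sub_zero]

lemma exists_linearIndepOn_sum_smul_eq {ι : Type*} (d : ι → E) (s : Finset ι) (c : ι → ℝ)
    (hc : ∀ i ∈ s, 0 ≤ c i) :
    ∃ t ⊆ s, LinearIndepOn ℝ d t ∧ ∃ c' : ι → ℝ, (∀ i ∈ t, 0 ≤ c' i) ∧
      ∑ i ∈ t, c' i • d i = ∑ i ∈ s, c i • d i := by
  classical
  induction s using Finset.strongInduction generalizing c with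
  | H s ih =>
    by_cases hs : LinearIndepOn ℝ d s
    · exact ⟨s, subset_rfl, hs, c, hc, rfl⟩
    obtain ⟨i, hi, c', hc', hsum⟩ := exists_mem_sum_erase_smul_eq hs hc
    obtain ⟨t, hts, ht, c'', hc'', hsum'⟩ :=
      ih _ (erase_ssubset hi) c' fun j hj => hc' j (mem_of_mem_erase hj)
    exact ⟨t, hts.trans (erase_subset _ _), ht, c'', hc'', hsum'.trans hsum⟩

variable [TopologicalSpace E] [IsTopologicalAddGroup E] [ContinuousSMul ℝ E] [T2Space E]

lemma isClosed_hull_range_of_linearIndependent {ι : Type*} [Fintype ι] {d : ι → E}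
    (hd : LinearIndependent ℝ d) : IsClosed (hull ℝ (Set.range d) : Set E) := by
  have hemb := LinearMap.isClosedEmbedding_of_injective
    (LinearMap.ker_eq_bot.2 (linearIndependent_iff_injective_fintypeLinearCombination.1 hd))
  have : (hull ℝ (Set.range d) : Set E) = Fintype.linearCombination ℝ d '' Set.Ici 0 := by
    ext y
    simp [mem_hull_range_iff, Fintype.linearCombination_apply]
  rw [this]
  exact hemb.isClosedMap _ isClosed_Ici

theorem isClosed_hull_range {ι : Type*} [Fintype ι] (d : ι → E) :
    IsClosed (hull ℝ (Set.range d) : Set E) := by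
  have : (hull ℝ (Set.range d) : Set E) =
      ⋃ (t : Finset ι) (_ : LinearIndepOn ℝ d t), hull ℝ (Set.range fun i : t => d i) := by
    refine subset_antisymm (fun y hy => ?_) (Set.iUnion₂_subset fun t _ =>
      Submodule.span_mono (Set.range_subset_iff.2 fun i => ⟨i, rfl⟩))
    obtain ⟨c, hc, rfl⟩ := mem_hull_range_iff.1 hy
    obtain ⟨t, -, ht, c', hc', hsum⟩ := exists_linearIndepOn_sum_smul_eq d univ c fun i _ => hc i
    refine Set.mem_iUnion₂.2 ⟨t, ht, mem_hull_range_iff.2 ⟨fun i => c' i, fun i => hc' i i.2, ?_⟩⟩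
    rw [sum_coe_sort t (fun i => c' i • d i), hsum]
  rw [this]
  exact isClosed_iUnion_of_finite fun t => isClosed_iUnion_of_finite
    isClosed_hull_range_of_linearIndependent

end PointedCone

theorem exists_pos_forall_dotProduct_nonpos {ι N : Type*} [Fintype ι] [Fintype N]
    (d : ι → N → ℝ) (h : ∀ c : ι → ℝ, 0 ≤ c → 0 ≤ ∑ i, c i • d i → ∑ i, c i • d i = 0) :
    ∃ w : N → ℝ, (∀ a, 0 < w a) ∧ ∀ i, d i ⬝ᵥ w ≤ 0 := by
  classical
  let C : ProperCone ℝ (N → ℝ) :=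
    ⟨PointedCone.hull ℝ (Set.range d), PointedCone.isClosed_hull_range d⟩
  have hdisj : Disjoint (stdSimplex ℝ N) C := by
    refine Set.disjoint_left.2 fun v hvΔ hvC => ?_
    obtain ⟨c, hc, rfl⟩ := PointedCone.mem_hull_range_iff.1 hvC
    have h1 := hvΔ.2
    rw [h c hc hvΔ.1] at h1
    simp at h1
  obtain ⟨f, hfC, hfΔ⟩ :=
    C.hyperplane_separation (convex_stdSimplex ℝ N) (isCompact_stdSimplex ℝ N) hdisj
  refine ⟨fun a => -f (Pi.single a 1), fun a => neg_pos.2 (hfΔ _ (single_mem_stdSimplex ℝ a)),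
    fun i => ?_⟩
  have hfd : f (d i) = ∑ a, d i a * f (Pi.single a 1) := by
    conv_lhs => rw [← univ_sum_single (d i), map_sum]
    refine sum_congr rfl fun a _ => ?_
    rw [← smul_eq_mul, ← map_smul, ← Pi.single_smul', smul_eq_mul, mul_one]
  have := hfC (d i) (PointedCone.subset_hull ⟨i, rfl⟩)
  simp only [dotProduct, mul_neg, sum_neg_distrib, ← hfd]
  linarith

section Transfer
variable {Goods Groups : Type*} [DecidableEq Goods] [DecidableEq Groups]

def transfer (α : Goods) (g g' : Groups) : Goods → Groups → ℝ :=
  Pi.single α (Pi.single g' 1 - Pi.single g 1)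

lemma sum_transfer_apply [Fintype Groups] (α : Goods) (g g' : Groups) (β : Goods) :
    ∑ h, transfer α g g' β h = 0 := by
  by_cases hβ : β = α
  · subst hβ
    simp [transfer, sum_sub_distrib]
  · simp [transfer, hβ]

lemma transfer_apply_neg {α β : Goods} {g g' h : Groups} (hneg : transfer α g g' β h < 0) :
    β = α ∧ h = g := by
  by_cases hβ : β = α
  · subst hβ
    refine ⟨rfl, by_contra fun hh => ?_⟩
    simp only [transfer, Pi.single_eq_same, Pi.sub_apply, Pi.single_apply, hh, if_false,
      sub_zero] at hneg
    split_ifs at hneg <;> norm_num at hneg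
  · simp [transfer, hβ] at hneg

end Transfer

section Allocation
variable {Goods Groups : Type*} [Fintype Goods] [Fintype Groups] {size : Groups → ℕ}

lemma sum_mul_le_sum_mul_of_supported_on_argmax {ι : Type*} [Fintype ι] {p q W : ι → ℝ}
    (hq : ∀ i, 0 ≤ q i) (hq1 : ∑ i, q i = 1) (hp : ∀ i, 0 ≤ p i) (hp1 : ∑ i, p i = 1)
    (hmax : ∀ i, 0 < p i → ∀ j, W j ≤ W i) :
    ∑ i, q i * W i ≤ ∑ i, p i * W i := by
  obtain ⟨i₀, -, hi₀⟩ := exists_lt_of_sum_lt (s := univ) (f := 0) (g := p) (by simp [hp1])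
  calc ∑ i, q i * W i ≤ ∑ i, q i * W i₀ :=
        sum_le_sum fun i _ => mul_le_mul_of_nonneg_left (hmax i₀ hi₀ i) (hq i)
    _ = ∑ i, p i * W i₀ := by rw [← sum_mul, ← sum_mul, hq1, hp1]
    _ ≤ ∑ i, p i * W i := sum_le_sum fun i _ => by
        rcases (hp i).eq_or_lt with h | h
        · simp [← h]
        · exact mul_le_mul_of_nonneg_left (hmax i h i₀) h.le

lemma IsFracAlloc.exists_add_smul {x z : Goods → Groups → ℝ} (hx : IsFracAlloc x)
    (hz : ∀ α, ∑ g, z α g = 0) (hzx : ∀ α g, z α g < 0 → 0 < x α g) :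
    ∃ t : ℝ, 0 < t ∧ IsFracAlloc (x + t • z) := by
  have hev : ∀ᶠ t in 𝓝[>] (0 : ℝ), ∀ α g, 0 ≤ x α g + t * z α g := by
    simp only [eventually_all]
    intro α g
    rcases le_or_gt 0 (z α g) with hzα | hzα
    · filter_upwards [self_mem_nhdsWithin] with t ht
      exact add_nonneg (hx.1 α g) (mul_nonneg (le_of_lt ht) hzα)
    · have hcont : Tendsto (fun t : ℝ => x α g + t * z α g) (𝓝 0) (𝓝 (x α g)) := by
        simpa using ((continuous_mul_const (z α g)).tendsto 0).const_add (x α g)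
      exact nhdsWithin_le_nhds ((hcont.eventually (lt_mem_nhds (hzx α g hzα))).mono
        fun t ht => ht.le)
  obtain ⟨t, ht, htpos⟩ := (hev.and self_mem_nhdsWithin).exists
  refine ⟨t, htpos, fun α g => ht α g, fun α => ?_⟩
  simp [sum_add_distrib, ← mul_sum, hx.2 α, hz α]

variable (u : (g : Groups) → Fin (size g) → Goods → ℝ)

def utilityMap : (Goods → Groups → ℝ) →ₗ[ℝ] ((g : Groups) × Fin (size g) → ℝ) where
  toFun z a := fracUtil u z a.1 a.2
  map_add' z z' := by
    ext a
    simp [fracUtil, add_mul, sum_add_distrib]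
  map_smul' t z := by
    ext a
    simp [fracUtil, mul_sum, mul_assoc]

lemma utilityMap_dotProduct (z : Goods → Groups → ℝ) (w : (g : Groups) × Fin (size g) → ℝ) :
    utilityMap u z ⬝ᵥ w = ∑ α, ∑ g, z α g * ∑ i, w ⟨g, i⟩ * u g i α := by
  simp only [dotProduct, utilityMap, LinearMap.coe_mk, AddHom.coe_mk, fracUtil,
    Fintype.sum_sigma, sum_mul, mul_sum]
  rw [sum_comm]
  refine sum_congr rfl fun g _ => ?_
  rw [sum_comm]
  exact sum_congr rfl fun α _ => sum_congr rfl fun i _ => by ring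

lemma utilityMap_transfer_dotProduct [DecidableEq Goods] [DecidableEq Groups] (α : Goods)
    (g g' : Groups) (w : (g : Groups) × Fin (size g) → ℝ) :
    utilityMap u (transfer α g g') ⬝ᵥ w =
      ∑ i, w ⟨g', i⟩ * u g' i α - ∑ i, w ⟨g, i⟩ * u g i α := by
  rw [utilityMap_dotProduct, sum_eq_single α (fun β _ hβ => by simp [transfer, hβ]) (by simp)]
  simp [transfer, sub_mul, sum_sub_distrib, Pi.single_apply]

variable {u} {x : Goods → Groups → ℝ}

lemma IsFPO.utilityMap_eq_zero_of_nonneg (hfpo : IsFPO u x) (hx : IsFracAlloc x)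
    {z : Goods → Groups → ℝ} (hz : ∀ α, ∑ g, z α g = 0) (hzx : ∀ α g, z α g < 0 → 0 < x α g)
    (hnn : 0 ≤ utilityMap u z) : utilityMap u z = 0 := by
  obtain ⟨t, ht, hy⟩ := hx.exists_add_smul hz hzx
  have hutil : ∀ g i, fracUtil u (x + t • z) g i = fracUtil u x g i + t * utilityMap u z ⟨g, i⟩ :=
    fun g i => by
      change utilityMap u (x + t • z) ⟨g, i⟩ = _
      rw [map_add, map_smul]
      rfl
  by_contra hne
  obtain ⟨⟨g, i⟩, hpos⟩ := (Pi.lt_def.1 (lt_of_le_of_ne hnn (Ne.symm hne))).2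
  refine hfpo ⟨x + t • z, hy, fun g i => ?_, g, i, ?_⟩
  · rw [hutil]
    exact le_add_of_nonneg_right (mul_nonneg ht.le (hnn _))
  · rw [hutil]
    exact lt_add_of_pos_right _ (mul_pos ht hpos)

theorem IsFPO.exists_weights (hfpo : IsFPO u x) (hx : IsFracAlloc x) :
    ∃ w : (g : Groups) → Fin (size g) → ℝ, (∀ g i, 0 < w g i) ∧
      ∀ α g, 0 < x α g → ∀ g', ∑ i, w g' i * u g' i α ≤ ∑ i, w g i * u g i α := by
  classical
  let z : {p : Goods × Groups × Groups // 0 < x p.1 p.2.1} → Goods → Groups → ℝ :=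
    fun p => transfer p.1.1 p.1.2.1 p.1.2.2
  have hcone : ∀ c : _ → ℝ, 0 ≤ c → 0 ≤ ∑ p, c p • utilityMap u (z p) →
      ∑ p, c p • utilityMap u (z p) = 0 := by
    intro c hc hnn
    simp only [← map_smul, ← map_sum] at hnn ⊢
    refine hfpo.utilityMap_eq_zero_of_nonneg hx (fun α => ?_) (fun α g hneg => ?_) hnn
    · simp [Finset.sum_apply, sum_comm (γ := Groups), ← mul_sum, z, sum_transfer_apply]
    · obtain ⟨p, -, hp⟩ := exists_lt_of_sum_lt (s := univ) (f := fun p => c p * z p α g)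
        (g := 0) (by simpa [Finset.sum_apply] using hneg)
      obtain ⟨rfl, rfl⟩ := transfer_apply_neg (neg_of_mul_neg_right hp (hc p))
      exact p.2
  obtain ⟨w, hw, hwz⟩ := exists_pos_forall_dotProduct_nonpos _ hcone
  refine ⟨fun g i => w ⟨g, i⟩, fun g i => hw _, fun α g hg g' => ?_⟩
  simpa [z, utilityMap_transfer_dotProduct, sub_nonpos] using hwz ⟨(α, g, g'), hg⟩

theorem isFPO_of_weights (hx : IsFracAlloc x) {w : (g : Groups) → Fin (size g) → ℝ}
    (hw : ∀ g i, 0 < w g i)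
    (hmax : ∀ α g, 0 < x α g → ∀ g', ∑ i, w g' i * u g' i α ≤ ∑ i, w g i * u g i α) :
    IsFPO u x := by
  rintro ⟨y, hy, hweak, g₀, i₀, hstrict⟩
  let w' : (g : Groups) × Fin (size g) → ℝ := fun a => w a.1 a.2
  have hlt : utilityMap u x ⬝ᵥ w' < utilityMap u y ⬝ᵥ w' :=
    sum_lt_sum (fun a _ => mul_le_mul_of_nonneg_right (hweak a.1 a.2) (hw a.1 a.2).le)
      ⟨⟨g₀, i₀⟩, mem_univ _, mul_lt_mul_of_pos_right hstrict (hw g₀ i₀)⟩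
  have hle : utilityMap u y ⬝ᵥ w' ≤ utilityMap u x ⬝ᵥ w' := by
    rw [utilityMap_dotProduct, utilityMap_dotProduct]
    exact sum_le_sum fun α _ =>
      sum_mul_le_sum_mul_of_supported_on_argmax (hy.1 α) (hy.2 α) (hx.1 α) (hx.2 α) (hmax α)
  exact hle.not_gt hlt

end Allocation

theorem stmt_16_general {Goods Groups : Type*} [Fintype Goods] [Fintype Groups]
    {size : Groups → ℕ}
    (u : (g : Groups) → Fin (size g) → Goods → ℝ)
    (x : Goods → Groups → ℝ) (hx : IsFracAlloc x) :
    IsFPO u x ↔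
      ∃ w : (g : Groups) → Fin (size g) → ℝ,
        (∀ g i, 0 < w g i) ∧
        ∀ (α : Goods) (g : Groups), 0 < x α g →
          ∀ g' : Groups, ∑ i, w g' i * u g' i α ≤ ∑ i, w g i * u g i α :=
  ⟨fun hfpo => hfpo.exists_weights hx, fun ⟨_, hw, hmax⟩ => isFPO_of_weights hx hw hmax⟩

/-- Varian-style characterization (group version): a fractional allocation is fPO iff
there are strictly positive agent weights such that every good is only (fractionally)
allocated to groups maximizing the weighted utility sum for that good. -/
theorem stmt_16 {Goods Groups : Type*} [Fintype Goods] [Fintype Groups]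
    {size : Groups → ℕ}
    (u : (g : Groups) → Fin (size g) → Goods → ℝ)
    (hu : ∀ g i a, 0 ≤ u g i a)
    (x : Goods → Groups → ℝ) (hx : IsFracAlloc x) :
    IsFPO u x ↔
      ∃ w : (g : Groups) → Fin (size g) → ℝ,
        (∀ g i, 0 < w g i) ∧
        ∀ (α : Goods) (g : Groups), 0 < x α g →
          ∀ g' : Groups, ∑ i, w g' i * u g' i α ≤ ∑ i, w g i * u g i α :=
  stmt_16_general u x hx
end

section
/- Case 1 of the two-couples rounding: suppose a fractional allocation gives group g the full integral bundle I_g, plus fractions z_α ∈ [0,1] of good α_g and z_β ∈ [0,1] of good β_g (with the other group g' receiving I_{g'} and fractions z_α of α_{g'}, z_β of β_{g'}), and suppose the allocation is envy-free for agent (g,i): u(I_g) + z_α u(α_g) + z_β u(β_g) ≥ u(I_{g'}) + z_α u(α_{g'}) + z_β u(β_{g'}). If z_α + z_β ≥ 1, then the 'natural rounding' giving g the bundle I_g ∪ {α_g, β_g} is EF1 for (g,i): u(I_g) + u(α_g) + u(β_g) ≥ u(I_{g'}) + min(u(α_{g'}), u(β_{g'})). -/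
/-- Case 1 of the two-couples rounding: if the fractional allocation is envy-free for the
agent and `z_α + z_β ≥ 1`, the natural rounding giving the group `I_g ∪ {α_g, β_g}` is EF1
for the agent. -/
theorem stmt_17 {Goods : Type*} [DecidableEq Goods]
    (u : Goods → ℝ) (hu : ∀ a, 0 ≤ u a)
    (Ig Ig' : Finset Goods) (hI : Disjoint Ig Ig')
    (ag ag' bg bg' : Goods)
    (hdist : [ag, ag', bg, bg'].Nodup)
    (hout : ∀ c ∈ [ag, ag', bg, bg'], c ∉ Ig ∧ c ∉ Ig')
    (za zb : ℝ) (hza : za ∈ Set.Icc (0 : ℝ) 1) (hzb : zb ∈ Set.Icc (0 : ℝ) 1)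
    (hz : 1 ≤ za + zb)
    (hef : ∑ a ∈ Ig', u a + za * u ag' + zb * u bg' ≤
           ∑ a ∈ Ig, u a + za * u ag + zb * u bg) :
    ∑ a ∈ Ig', u a + min (u ag') (u bg') ≤ ∑ a ∈ Ig, u a + u ag + u bg := by
  obtain ⟨h1, h2⟩ := hza
  obtain ⟨h3, h4⟩ := hzb
  have m1 : min (u ag') (u bg') ≤ u ag' := min_le_left _ _
  have m2 : min (u ag') (u bg') ≤ u bg' := min_le_right _ _
  have m0 : 0 ≤ min (u ag') (u bg') := le_min (hu _) (hu _)
  nlinarith [hu ag, hu bg, hu ag', hu bg']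
end

section
/- With binary valuations where every agent of every couple approves between kn+1 and (k+1)n goods (for some integer k ≥ 0, n couples), after a greedy phase allocating at most k commonly-approved goods per group, the fractional point x_{α,(g,i)} = (k − k_g)/(kn − k') when (g,i) approves α (and 0 otherwise) is feasible for the polytope requiring each remaining agent (g,i) to get total weight ≥ k − k_g and each remaining good total weight ≤ 1; since the constraint matrix is the incidence matrix of a bipartite graph and hence totally unimodular, an integral solution exists, yielding a PROP1 allocation. -/
/-!
Every agent receives the weight `c g = (k - k_g)/(kn - k')` on each good it approves. Since
`∑ g (k - k_g) = kn - k'`, the weights `c g` sum to `1`; a remaining good is approved by at most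
one agent per group, so its load is at most `∑ g c g = 1`, while an agent approving at least
`kn - k'` goods collects at least `k - k_g`. A fractional solution of this bipartite demand
problem satisfies Hall's condition with demands (count the weight leaving a set of agents
towards its neighbourhood), so Hall's marriage theorem yields the integral allocation.
-/

open Finset

section DemandHall

variable {ι β : Type*} [DecidableEq β]

theorem exists_disjoint_subsets_of_sum_le_card_biUnion (A : ι → Finset β) (d : ι → ℕ)
    (hall : ∀ s : Finset ι, ∑ a ∈ s, d a ≤ (s.biUnion A).card) :
    ∃ T : ι → Finset β, (∀ a, T a ⊆ A a) ∧ Pairwise (fun a a' => Disjoint (T a) (T a')) ∧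
      ∀ a, d a ≤ (T a).card := by
  classical
  -- Hall's theorem for the agent `a` cloned `d a` times.
  have hall' : ∀ s : Finset (Σ a, Fin (d a)), s.card ≤ (s.biUnion fun x => A x.1).card := by
    intro s
    calc s.card ≤ ((s.image Sigma.fst).sigma fun a => (univ : Finset (Fin (d a)))).card :=
          card_le_card fun x hx => mem_sigma.mpr ⟨mem_image_of_mem _ hx, mem_univ _⟩
      _ = ∑ a ∈ s.image Sigma.fst, d a := by simp
      _ ≤ ((s.image Sigma.fst).biUnion A).card := hall _
      _ = (s.biUnion fun x => A x.1).card := by rw [image_biUnion]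
  obtain ⟨f, hf, hfA⟩ := (all_card_le_biUnion_card_iff_exists_injective _).mp hall'
  have hf_clone : ∀ a, Function.Injective fun j : Fin (d a) => f ⟨a, j⟩ :=
    fun a => hf.comp sigma_mk_injective
  refine ⟨fun a => univ.image fun j => f ⟨a, j⟩, ?_, ?_, ?_⟩
  · rintro a _ hb
    obtain ⟨j, -, rfl⟩ := mem_image.mp hb
    exact hfA ⟨a, j⟩
  · intro a a' hne
    refine disjoint_left.mpr fun b hb hb' => hne ?_
    obtain ⟨j, -, rfl⟩ := mem_image.mp hb
    obtain ⟨j', -, hjj'⟩ := mem_image.mp hb'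
    exact congrArg Sigma.fst (hf hjj').symm
  · intro a
    rw [card_image_of_injective _ (hf_clone a), card_univ, Fintype.card_fin]

variable [Fintype ι] [Fintype β]

theorem sum_le_card_biUnion_of_fractional (A : ι → Finset β) (d : ι → ℕ) (w : β → ι → ℝ)
    (hw : ∀ b a, 0 ≤ w b a) (hwA : ∀ b a, b ∉ A a → w b a = 0)
    (hdemand : ∀ a, (d a : ℝ) ≤ ∑ b, w b a) (hcap : ∀ b, ∑ a, w b a ≤ 1) (s : Finset ι) :
    ∑ a ∈ s, d a ≤ (s.biUnion A).card := by
  have hout : ∀ b ∉ s.biUnion A, ∑ a ∈ s, w b a = 0 := fun b hb =>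
    sum_eq_zero fun a ha => hwA b a fun hbA => hb (mem_biUnion.mpr ⟨a, ha, hbA⟩)
  have key : (∑ a ∈ s, d a : ℝ) ≤ (s.biUnion A).card := calc
    (∑ a ∈ s, d a : ℝ) ≤ ∑ a ∈ s, ∑ b, w b a := sum_le_sum fun a _ => hdemand a
    _ = ∑ b ∈ s.biUnion A, ∑ a ∈ s, w b a := by
      rw [sum_comm, sum_subset (subset_univ _) fun b _ hb => hout b hb]
    _ ≤ ∑ b ∈ s.biUnion A, ∑ a, w b a :=
      sum_le_sum fun b _ => sum_le_sum_of_subset_of_nonneg (subset_univ s) fun a _ _ => hw b a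
    _ ≤ ∑ _b ∈ s.biUnion A, (1 : ℝ) := sum_le_sum fun b _ => hcap b
    _ = (s.biUnion A).card := by rw [sum_const, nsmul_one]
  exact_mod_cast key

theorem exists_disjoint_subsets_of_fractional (A : ι → Finset β) (d : ι → ℕ) (w : β → ι → ℝ)
    (hw : ∀ b a, 0 ≤ w b a) (hwA : ∀ b a, b ∉ A a → w b a = 0)
    (hdemand : ∀ a, (d a : ℝ) ≤ ∑ b, w b a) (hcap : ∀ b, ∑ a, w b a ≤ 1) :
    ∃ T : ι → Finset β, (∀ a, T a ⊆ A a) ∧ Pairwise (fun a a' => Disjoint (T a) (T a')) ∧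
      ∀ a, d a ≤ (T a).card :=
  exists_disjoint_subsets_of_sum_le_card_biUnion A d
    (sum_le_card_biUnion_of_fractional A d w hw hwA hdemand hcap)

end DemandHall

theorem sum_sum_ite_mem_le_of_not_mem_both {G Goods : Type*} [Fintype G] [DecidableEq Goods]
    (A : G → Fin 2 → Finset Goods) (c : G → ℝ) (hc : ∀ g, 0 ≤ c g)
    (honce : ∀ (α : Goods) (g : G), ¬(α ∈ A g 0 ∧ α ∈ A g 1)) (α : Goods) :
    ∑ g, ∑ i, (if α ∈ A g i then c g else 0) ≤ ∑ g, c g := by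
  refine sum_le_sum fun g _ => ?_
  have := honce α g
  have := hc g
  rw [Fin.sum_univ_two]
  split_ifs <;> first | tauto | linarith

theorem le_sum_ite_mem_div {β : Type*} [Fintype β] [DecidableEq β] (s : Finset β) {a D : ℝ}
    (ha : 0 ≤ a) (hD : 0 < D) (hs : D ≤ s.card) :
    a ≤ ∑ b, if b ∈ s then a / D else 0 := by
  rw [sum_ite_mem, univ_inter, sum_const, nsmul_eq_mul]
  calc a = D * (a / D) := (mul_div_cancel₀ a hD.ne').symm
    _ ≤ s.card * (a / D) := mul_le_mul_of_nonneg_right hs (div_nonneg ha hD.le)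

theorem sum_cast_sub_eq {G : Type*} [Fintype G] (n k : ℕ) (hn : Fintype.card G = n)
    (kg : G → ℕ) (k' : ℕ) (hk' : k' = ∑ g, kg g) :
    ∑ g, ((k : ℝ) - kg g) = k * n - k' := by
  rw [sum_sub_distrib, sum_const, card_univ, hn, nsmul_eq_mul, hk']
  push_cast
  ring

/-- Binary-valuations lemma (second phase): after a greedy phase giving group `g` a total
of `k_g ≤ k` commonly-approved goods, the fractional point assigning
`(k - k_g)/(kn - k')` to each approved (good, agent) pair is feasible for the polytope
requiring agent weights at least `k - k_g` and good weights at most `1`; and (by total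
unimodularity of bipartite incidence matrices) an integral solution exists, i.e., the
remaining agents can be given disjoint sets of at least `k - k_g` approved goods. -/
theorem stmt_19 {Goods G : Type*} [Fintype Goods] [Fintype G] [DecidableEq Goods]
    (n k : ℕ) (hn : Fintype.card G = n)
    (A : G → Fin 2 → Finset Goods)
    (kg : G → ℕ) (hkg : ∀ g, kg g ≤ k)
    (k' : ℕ) (hk' : k' = ∑ g, kg g) (hlt : k' < k * n)
    (hdeg : ∀ g i, k * n + 1 - k' ≤ (A g i).card)
    (honce : ∀ (α : Goods) (g : G), ¬(α ∈ A g 0 ∧ α ∈ A g 1))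
    (x : Goods → G → Fin 2 → ℝ)
    (hxdef : x = fun α g i =>
      if α ∈ A g i then ((k : ℝ) - kg g) / ((k * n : ℝ) - k') else 0) :
    (∀ α g i, 0 ≤ x α g i ∧ x α g i ≤ 1) ∧
    (∀ g i, (k : ℝ) - kg g ≤ ∑ α, x α g i) ∧
    (∀ α, ∑ g, ∑ i, x α g i ≤ 1) ∧
    ∃ T : G → Fin 2 → Finset Goods,
      (∀ g i, T g i ⊆ A g i) ∧
      (∀ g i g' i', (g, i) ≠ (g', i') → Disjoint (T g i) (T g' i')) ∧
      (∀ g i, k - kg g ≤ (T g i).card) := by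
  set c : G → ℝ := fun g => ((k : ℝ) - kg g) / ((k * n : ℝ) - k')
  have hx : ∀ α g i, x α g i = if α ∈ A g i then c g else 0 := by simp [hxdef, c]
  have hden : (0 : ℝ) < k * n - k' := sub_pos.mpr (by exact_mod_cast hlt)
  have hnum : ∀ g, (0 : ℝ) ≤ k - kg g := fun g => sub_nonneg.mpr (by exact_mod_cast hkg g)
  have hc0 : ∀ g, 0 ≤ c g := fun g => div_nonneg (hnum g) hden.le
  have hsum : ∑ g, c g = 1 := by
    rw [← sum_div, sum_cast_sub_eq n k hn kg k' hk', div_self hden.ne']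
  have hc1 : ∀ g, c g ≤ 1 := fun g => hsum ▸ single_le_sum (fun g _ => hc0 g) (mem_univ g)
  have hbounds : ∀ α g i, 0 ≤ x α g i ∧ x α g i ≤ 1 := by
    intro α g i
    rw [hx]
    split_ifs
    exacts [⟨hc0 g, hc1 g⟩, ⟨le_rfl, zero_le_one⟩]
  have hagent : ∀ g i, (k : ℝ) - kg g ≤ ∑ α, x α g i := by
    intro g i
    have hcard : (k * n : ℝ) - k' ≤ (A g i).card := by
      have : k * n ≤ k' + (A g i).card := by have := hdeg g i; omega
      have : (k * n : ℝ) ≤ k' + (A g i).card := by exact_mod_cast this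
      linarith
    simp_rw [hx]
    exact le_sum_ite_mem_div _ (hnum g) hden hcard
  have hgood : ∀ α, ∑ g, ∑ i, x α g i ≤ 1 := fun α => by
    simp_rw [hx, ← hsum]
    exact sum_sum_ite_mem_le_of_not_mem_both A c hc0 honce α
  obtain ⟨T, hTA, hTdisj, hTcard⟩ := exists_disjoint_subsets_of_fractional
    (fun p : G × Fin 2 => A p.1 p.2) (fun p => k - kg p.1) (fun α p => x α p.1 p.2)
    (fun α p => (hbounds α p.1 p.2).1) (fun α p hα => by simp [hx, hα])
    (fun p => by rw [Nat.cast_sub (hkg p.1)]; exact hagent p.1 p.2)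
    (fun α => by rw [Fintype.sum_prod_type]; exact hgood α)
  exact ⟨hbounds, hagent, hgood, fun g i => T (g, i), fun g i => hTA (g, i),
    fun g i g' i' hne => hTdisj hne, fun g i => hTcard (g, i)⟩
end
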